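/- arXiv:2011.11223 — 6 statements merged into one kernel-verified Lean document; each statement's English description precedes it below -/
import Mathlib

section
/- Let G = (V, E) be a connected, undirected, unweighted finite graph, let A be a complex matrix indexed by V with geodesic-width ω(A), let P_A be its diagonal preconditioning matrix, and let Q be an invertible diagonal matrix with real diagonal entries such that Q − P_A is positive semidefinite. Then for every initial vector x₀ ∈ ℂ^V, the sequence defined inductively by x_{n+1} = (I − Q^{-2} A* A) x_n converges exponentially to a vector u satisfying A u = 0; precisely, there exist u ∈ ℂ^V with A u = 0 and r ∈ [0, 1) such that ‖Q(x_n − u)‖₂ ≤ ‖Q x₀‖₂ · rⁿ for all n ≥ 0. -/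
open Matrix BigOperators
open scoped ComplexOrder

/-- The closed ball `B(i, s)` of radius `s` around vertex `i` in the geodesic distance. -/
noncomputable def gball {V : Type*} [Fintype V] (G : SimpleGraph V) (i : V) (s : ℕ) :
    Finset V :=
  Finset.univ.filter fun j => G.dist i j ≤ s

/-- The diagonal entries of the preconditioning matrix `P_A` of a matrix `A` with
geodesic-width parameter `ω`:
`P_A(i,i) = max_{k ∈ B(i,ω)} max( Σ_{j ∈ B(k,ω)} |A(j,k)|, Σ_{j ∈ B(k,ω)} |A(k,j)| )`. -/
noncomputable def precond {V : Type*} [Fintype V] (G : SimpleGraph V)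
    (A : Matrix V V ℂ) (ω : ℕ) (i : V) : ℝ :=
  (gball G i ω).sup'
    ⟨i, by simp [gball, SimpleGraph.dist_self]⟩
    fun k => max (∑ j ∈ gball G k ω, ‖A j k‖)
      (∑ j ∈ gball G k ω, ‖A k j‖)

/-- The Euclidean (ℓ²) norm of a complex vector. -/
noncomputable def l2norm {V : Type*} [Fintype V] (y : V → ℂ) : ℝ :=
  Real.sqrt (∑ j, ‖y j‖ ^ 2)

/-!
Substituting `y = Q x` turns the iteration into `y_{n+1} = S y_n` with `S = 1 - Cᴴ C` and
`C = A Q⁻¹`. The Schur test, applied with the row and column sums of `|A|` over geodesic balls,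
which are bounded by `P_A ≤ Q`, shows that `C` is an ℓ²-contraction, so the Hermitian matrix `S`
has its spectrum in `[0, 1]`. Diagonalising `S`, the powers `S^n` converge to the spectral
projection `P` onto the eigenspace of `1`, which is `ker C`, at the rate `r^n` with `r < 1` the
largest other eigenvalue. The limit `u = Q⁻¹ P Q x₀` then satisfies `A u = C P Q x₀ = 0`.
-/

section L2Norm

variable {n : Type*} [Fintype n]

lemma l2norm_nonneg (y : n → ℂ) : 0 ≤ l2norm y := Real.sqrt_nonneg _

lemma sq_l2norm (y : n → ℂ) : l2norm y ^ 2 = ∑ j, ‖y j‖ ^ 2 :=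
  Real.sq_sqrt (Finset.sum_nonneg fun _ _ => sq_nonneg _)

lemma l2norm_ofLp (x : EuclideanSpace ℂ n) : l2norm x.ofLp = ‖x‖ := (EuclideanSpace.norm_eq x).symm

lemma star_dotProduct_self (y : n → ℂ) : star y ⬝ᵥ y = ((l2norm y ^ 2 : ℝ) : ℂ) := by
  rw [sq_l2norm]
  push_cast
  exact Finset.sum_congr rfl fun j _ => RCLike.conj_mul (y j)

lemma l2norm_le_mul_of_norm_le {y z : n → ℂ} {c : ℝ} (hc : 0 ≤ c) (h : ∀ i, ‖y i‖ ≤ c * ‖z i‖) :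
    l2norm y ≤ c * l2norm z := by
  rw [← pow_le_pow_iff_left₀ (l2norm_nonneg y) (mul_nonneg hc (l2norm_nonneg z)) two_ne_zero,
    mul_pow, sq_l2norm, sq_l2norm, Finset.mul_sum]
  gcongr with i
  rw [← mul_pow]
  exact pow_le_pow_left₀ (norm_nonneg _) (h i) 2

variable [DecidableEq n]

lemma l2norm_unitary_mulVec (U : unitaryGroup n ℂ) (y : n → ℂ) :
    l2norm ((U : Matrix n n ℂ) *ᵥ y) = l2norm y := by
  have h : star ((U : Matrix n n ℂ) *ᵥ y) ⬝ᵥ ((U : Matrix n n ℂ) *ᵥ y) = star y ⬝ᵥ y := by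
    rw [star_mulVec, dotProduct_mulVec, vecMul_vecMul, ← star_eq_conjTranspose,
      Unitary.coe_star_mul_self, vecMul_one]
  rw [star_dotProduct_self, star_dotProduct_self] at h
  exact (pow_left_inj₀ (l2norm_nonneg _) (l2norm_nonneg _) two_ne_zero).mp (by exact_mod_cast h)

lemma l2norm_diagonal_mulVec_le {d : n → ℂ} {c : ℝ} (hc : 0 ≤ c) (hd : ∀ i, ‖d i‖ ≤ c)
    (y : n → ℂ) : l2norm (diagonal d *ᵥ y) ≤ c * l2norm y :=
  l2norm_le_mul_of_norm_le hc fun i => by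
    rw [mulVec_diagonal, norm_mul]
    exact mul_le_mul_of_nonneg_right (hd i) (norm_nonneg _)

end L2Norm

theorem sq_l2norm_mulVec_le_of_sum_norm_le {m n : Type*} [Fintype m] [Fintype n]
    (A : Matrix m n ℂ) (p : n → ℝ)
    (hrow : ∀ k j, A k j ≠ 0 → ∑ l, ‖A k l‖ ≤ p j) (hcol : ∀ j, ∑ k, ‖A k j‖ ≤ p j)
    (z : n → ℂ) : l2norm (A *ᵥ z) ^ 2 ≤ ∑ j, (p j * ‖z j‖) ^ 2 := by
  have hentry : ∀ k, ‖(A *ᵥ z) k‖ ^ 2 ≤ (∑ l, ‖A k l‖) * ∑ j, ‖A k j‖ * ‖z j‖ ^ 2 := fun k =>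
    calc ‖(A *ᵥ z) k‖ ^ 2 ≤ (∑ j, ‖A k j‖ * ‖z j‖) ^ 2 := by
          gcongr
          exact (norm_sum_le _ _).trans_eq (by simp only [norm_mul])
      _ ≤ (∑ l, ‖A k l‖) * ∑ j, ‖A k j‖ * ‖z j‖ ^ 2 :=
          Finset.sum_sq_le_sum_mul_sum_of_sq_le_mul _ (fun _ _ => norm_nonneg _)
            (fun _ _ => by positivity) (fun _ _ => le_of_eq (by ring))
  have hcolumn : ∀ j, ∑ k, (∑ l, ‖A k l‖) * ‖A k j‖ ≤ p j ^ 2 := fun j =>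
    calc ∑ k, (∑ l, ‖A k l‖) * ‖A k j‖ ≤ ∑ k, p j * ‖A k j‖ :=
          Finset.sum_le_sum fun k _ => by
            by_cases h : A k j = 0
            · simp [h]
            · exact mul_le_mul_of_nonneg_right (hrow k j h) (norm_nonneg _)
      _ = p j * ∑ k, ‖A k j‖ := (Finset.mul_sum _ _ _).symm
      _ ≤ p j * p j :=
          mul_le_mul_of_nonneg_left (hcol j)
            ((Finset.sum_nonneg fun _ _ => norm_nonneg _).trans (hcol j))
      _ = p j ^ 2 := (sq _).symm
  calc l2norm (A *ᵥ z) ^ 2 = ∑ k, ‖(A *ᵥ z) k‖ ^ 2 := sq_l2norm _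
    _ ≤ ∑ k, (∑ l, ‖A k l‖) * ∑ j, ‖A k j‖ * ‖z j‖ ^ 2 := Finset.sum_le_sum fun k _ => hentry k
    _ = ∑ j, (∑ k, (∑ l, ‖A k l‖) * ‖A k j‖) * ‖z j‖ ^ 2 := by
          simp_rw [Finset.mul_sum, Finset.sum_mul, mul_assoc]
          exact Finset.sum_comm
    _ ≤ ∑ j, p j ^ 2 * ‖z j‖ ^ 2 := by gcongr with j; exact hcolumn j
    _ = ∑ j, (p j * ‖z j‖) ^ 2 := by simp_rw [mul_pow]

section GeodesicWidth

variable {V : Type*} [Fintype V] {G : SimpleGraph V} {A : Matrix V V ℂ} {ω : ℕ}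

lemma self_mem_gball (i : V) : i ∈ gball G i ω := by simp [gball]

lemma le_precond_of_mem_gball {i k : V} (hk : k ∈ gball G i ω) :
    max (∑ j ∈ gball G k ω, ‖A j k‖) (∑ j ∈ gball G k ω, ‖A k j‖) ≤ precond G A ω i :=
  Finset.le_sup' (fun k => max (∑ j ∈ gball G k ω, ‖A j k‖) (∑ j ∈ gball G k ω, ‖A k j‖)) hk

lemma precond_nonneg (i : V) : 0 ≤ precond G A ω i :=
  (Finset.sum_nonneg fun _ _ => norm_nonneg _).trans
    ((le_max_left _ _).trans (le_precond_of_mem_gball (self_mem_gball i)))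

variable (hω : ∀ i j, ω < G.dist i j → A i j = 0)
include hω

lemma sum_norm_row_le_precond {k j : V} (h : A k j ≠ 0) : ∑ l, ‖A k l‖ ≤ precond G A ω j := by
  have hk : k ∈ gball G j ω := by
    simpa [gball, SimpleGraph.dist_comm] using fun hlt => h (hω k j hlt)
  have hrow : ∑ l, ‖A k l‖ = ∑ l ∈ gball G k ω, ‖A k l‖ :=
    (Finset.sum_subset (Finset.subset_univ _) fun l _ hl => by
      simp [hω k l (by simpa [gball] using hl)]).symm
  rw [hrow]
  exact (le_max_right _ _).trans (le_precond_of_mem_gball hk)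

lemma sum_norm_col_le_precond (j : V) : ∑ k, ‖A k j‖ ≤ precond G A ω j := by
  have hcol : ∑ k, ‖A k j‖ = ∑ k ∈ gball G j ω, ‖A k j‖ :=
    (Finset.sum_subset (Finset.subset_univ _) fun k _ hk => by
      simp [hω k j (by simpa [gball, SimpleGraph.dist_comm] using hk)]).symm
  rw [hcol]
  exact (le_max_left _ _).trans (le_precond_of_mem_gball (self_mem_gball j))

theorem l2norm_mulVec_le_of_precond_le [DecidableEq V] {q : V → ℝ}
    (hq : ∀ i, precond G A ω i ≤ q i) (z : V → ℂ) :
    l2norm (A *ᵥ z) ≤ l2norm (diagonal (fun i => (q i : ℂ)) *ᵥ z) := by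
  rw [← pow_le_pow_iff_left₀ (l2norm_nonneg _) (l2norm_nonneg _) two_ne_zero,
    sq_l2norm (diagonal _ *ᵥ z)]
  refine (sq_l2norm_mulVec_le_of_sum_norm_le A _ (fun _ _ => sum_norm_row_le_precond hω)
    (sum_norm_col_le_precond hω) z).trans (Finset.sum_le_sum fun j _ => ?_)
  rw [mulVec_diagonal, norm_mul, Complex.norm_real, Real.norm_eq_abs]
  have hp := precond_nonneg (G := G) (A := A) (ω := ω) j
  gcongr
  exact (hq j).trans (le_abs_self _)

end GeodesicWidth

section Spectral

variable {m n : Type*} [Fintype m] [Fintype n] [DecidableEq n]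

lemma l2norm_eigenvectorBasis {S : Matrix n n ℂ} (hS : S.IsHermitian) (i : n) :
    l2norm (hS.eigenvectorBasis i).ofLp = 1 :=
  (l2norm_ofLp _).trans (hS.eigenvectorBasis.orthonormal.1 i)

theorem Matrix.IsHermitian.exists_pow_sub_mulVec_le {S : Matrix n n ℂ} (hS : S.IsHermitian)
    (hlo : ∀ i, -1 < hS.eigenvalues i) (hhi : ∀ i, hS.eigenvalues i ≤ 1) :
    ∃ (P : Matrix n n ℂ) (r : ℝ), S * P = P ∧ 0 ≤ r ∧ r < 1 ∧
      ∀ k y, l2norm ((S ^ k - P) *ᵥ y) ≤ r ^ k * l2norm y := by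
  set μ := hS.eigenvalues
  set U := hS.eigenvectorUnitary
  -- `P` will be the spectral projection `U (diagonal e) Uᴴ` onto the eigenspace of `1`.
  let e : n → ℂ := fun i => if μ i = 1 then 1 else 0
  obtain ⟨r, hr0, hr1, hr⟩ : ∃ r : ℝ, 0 ≤ r ∧ r < 1 ∧ ∀ i, μ i ≠ 1 → |μ i| ≤ r := by
    refine ⟨((Finset.univ.filter fun i => μ i ≠ 1).sup fun i => ‖μ i‖₊ : NNReal),
      NNReal.coe_nonneg _, ?_, fun i hi => Finset.le_sup (f := fun i => ‖μ i‖₊) (by simpa using hi)⟩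
    refine NNReal.coe_lt_one.mpr ((Finset.sup_lt_iff zero_lt_one).mpr fun i hi => ?_)
    have hμ : |μ i| < 1 := abs_lt.mpr ⟨hlo i, lt_of_le_of_ne (hhi i) (by simpa using hi)⟩
    exact_mod_cast hμ
  have hdiag : ∀ k i, ‖(μ i : ℂ) ^ k - e i‖ ≤ r ^ k := fun k i => by
    by_cases h : μ i = 1
    · simp [e, h, pow_nonneg hr0 k]
    · simpa [e, h] using pow_le_pow_left₀ (abs_nonneg _) (hr i h) k
  have hpow : ∀ k, S ^ k = Unitary.conjStarAlgAut ℂ _ U (diagonal fun i => (μ i : ℂ) ^ k) :=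
    fun k => by
      rw [show (diagonal fun i => (μ i : ℂ) ^ k) = diagonal (RCLike.ofReal ∘ μ) ^ k from
        (diagonal_pow _ _).symm, map_pow, ← hS.spectral_theorem]
  refine ⟨Unitary.conjStarAlgAut ℂ _ U (diagonal e), r, ?_, hr0, hr1, fun k y => ?_⟩
  · rw [← pow_one S, hpow, ← map_mul, diagonal_mul_diagonal]
    congr 2
    funext i
    by_cases h : μ i = 1 <;> simp [e, h]
  · rw [hpow, ← map_sub, diagonal_sub, Unitary.conjStarAlgAut_apply, ← mulVec_mulVec,
      ← mulVec_mulVec, l2norm_unitary_mulVec, ← Unitary.coe_star,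
      ← l2norm_unitary_mulVec (star U) y]
    exact l2norm_diagonal_mulVec_le (pow_nonneg hr0 k) (hdiag k) _

lemma eigenvalues_one_sub_conjTranspose_mul_self (C : Matrix m n ℂ)
    (hS : (1 - Cᴴ * C).IsHermitian) (i : n) :
    hS.eigenvalues i = 1 - l2norm (C *ᵥ (hS.eigenvectorBasis i).ofLp) ^ 2 := by
  rw [hS.eigenvalues_eq, sub_mulVec, one_mulVec, dotProduct_sub, ← mulVec_mulVec,
    dotProduct_mulVec, ← star_mulVec, star_dotProduct_self, star_dotProduct_self,
    l2norm_eigenvectorBasis]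
  simp [-Complex.ofReal_pow]

theorem exists_pow_one_sub_conjTranspose_mul_self_sub_le (C : Matrix m n ℂ)
    (hC : ∀ y, l2norm (C *ᵥ y) ≤ l2norm y) :
    ∃ (P : Matrix n n ℂ) (r : ℝ), C * P = 0 ∧ 0 ≤ r ∧ r < 1 ∧
      ∀ k y, l2norm (((1 - Cᴴ * C) ^ k - P) *ᵥ y) ≤ r ^ k * l2norm y := by
  have hS : (1 - Cᴴ * C).IsHermitian := isHermitian_one.sub (isHermitian_conjTranspose_mul_self C)
  have hμ := eigenvalues_one_sub_conjTranspose_mul_self C hS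
  obtain ⟨P, r, hSP, hr0, hr1, hP⟩ := hS.exists_pow_sub_mulVec_le
    (fun i => by
      have := pow_le_pow_left₀ (l2norm_nonneg _) ((hC _).trans_eq (l2norm_eigenvectorBasis hS i)) 2
      rw [hμ]; linarith)
    (fun i => by rw [hμ]; linarith [sq_nonneg (l2norm (C *ᵥ (hS.eigenvectorBasis i).ofLp))])
  refine ⟨P, r, ?_, hr0, hr1, hP⟩
  rwa [Matrix.sub_mul, Matrix.one_mul, sub_eq_self, conjTranspose_mul_self_mul_eq_zero] at hSP

end Spectral

lemma mul_one_sub_inv_sq_mul {m n : Type*} [Fintype m] [Fintype n] [DecidableEq n]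
    {Q : Matrix n n ℂ} (hQ : Q.IsHermitian) (hQu : IsUnit Q) (A : Matrix m n ℂ) :
    Q * (1 - Q⁻¹ ^ 2 * Aᴴ * A) = (1 - (A * Q⁻¹)ᴴ * (A * Q⁻¹)) * Q := by
  have hdet := (isUnit_iff_isUnit_det Q).mp hQu
  simp only [conjTranspose_mul, conjTranspose_nonsing_inv, hQ.eq, Matrix.mul_sub, Matrix.sub_mul,
    Matrix.mul_one, Matrix.one_mul, sq, Matrix.mul_assoc, mul_nonsing_inv_cancel_left Q _ hdet,
    nonsing_inv_mul _ hdet]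

theorem stmt_0_general {V : Type*} [Fintype V] [DecidableEq V]
    (G : SimpleGraph V)
    (A : Matrix V V ℂ) (ω : ℕ) (hω : ∀ i j, ω < G.dist i j → A i j = 0)
    (q : V → ℝ) (Q : Matrix V V ℂ)
    (hQdiag : Q = Matrix.diagonal fun i => (q i : ℂ))
    (hQinv : IsUnit Q)
    (hPSD : (Q - Matrix.diagonal fun i => ((precond G A ω i : ℝ) : ℂ)).PosSemidef)
    (x₀ : V → ℂ) (x : ℕ → V → ℂ) (hx0 : x 0 = x₀)
    (hxrec : ∀ n, x (n + 1) = (1 - Q⁻¹ ^ 2 * Aᴴ * A) *ᵥ x n) :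
    ∃ (u : V → ℂ) (r : ℝ), A *ᵥ u = 0 ∧ 0 ≤ r ∧ r < 1 ∧
      ∀ n, l2norm (Q *ᵥ (x n - u)) ≤ l2norm (Q *ᵥ x₀) * r ^ n := by
  have hQQ : Q * Q⁻¹ = 1 := mul_nonsing_inv Q ((isUnit_iff_isUnit_det Q).mp hQinv)
  have hQ : Q.IsHermitian := hQdiag ▸ isHermitian_diagonal_of_self_adjoint _ (by ext; simp)
  have hpq : ∀ i, precond G A ω i ≤ q i := by
    rw [hQdiag, diagonal_sub, posSemidef_diagonal_iff] at hPSD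
    exact fun i => by exact_mod_cast sub_nonneg.mp (hPSD i)
  have hC : ∀ y, l2norm ((A * Q⁻¹) *ᵥ y) ≤ l2norm y := fun y => by
    have := l2norm_mulVec_le_of_precond_le hω hpq (Q⁻¹ *ᵥ y)
    rwa [← hQdiag, mulVec_mulVec, mulVec_mulVec, hQQ, one_mulVec] at this
  obtain ⟨P, r, hCP, hr0, hr1, hP⟩ := exists_pow_one_sub_conjTranspose_mul_self_sub_le _ hC
  have hQx : ∀ k, Q *ᵥ x k = (1 - (A * Q⁻¹)ᴴ * (A * Q⁻¹)) ^ k *ᵥ (Q *ᵥ x₀) := by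
    intro k
    induction k with
    | zero => rw [hx0, pow_zero, one_mulVec]
    | succ k ih =>
      rw [hxrec, mulVec_mulVec, mul_one_sub_inv_sq_mul hQ hQinv, ← mulVec_mulVec, ih,
        mulVec_mulVec, pow_succ']
  refine ⟨Q⁻¹ *ᵥ (P *ᵥ (Q *ᵥ x₀)), r, ?_, hr0, hr1, fun k => ?_⟩
  · rw [mulVec_mulVec, mulVec_mulVec, hCP, zero_mulVec]
  · rw [mulVec_sub, hQx, mulVec_mulVec (P *ᵥ (Q *ᵥ x₀)) Q Q⁻¹, hQQ, one_mulVec, ← sub_mulVec,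
      mul_comm]
    exact hP k _

/-- Let `G` be a connected finite graph, `A` a complex matrix indexed by the
vertices with geodesic-width at most `ω`, `P_A` its diagonal preconditioning matrix, and `Q`
an invertible diagonal matrix with real diagonal entries such that `Q - P_A` is positive
semidefinite.  Then for any initial vector `x₀`, the sequence `x_{n+1} = (I - Q⁻² Aᴴ A) x_n`
converges exponentially to a vector `u` with `A u = 0`: there are `u` with `A u = 0` and
`r ∈ [0,1)` with `‖Q (x_n - u)‖₂ ≤ ‖Q x₀‖₂ rⁿ` for all `n`. -/
theorem stmt_0 {V : Type*} [Fintype V] [DecidableEq V]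
    (G : SimpleGraph V) (hG : G.Connected)
    (A : Matrix V V ℂ) (ω : ℕ) (hω : ∀ i j, ω < G.dist i j → A i j = 0)
    (q : V → ℝ) (Q : Matrix V V ℂ)
    (hQdiag : Q = Matrix.diagonal fun i => (q i : ℂ))
    (hQinv : IsUnit Q)
    (hPSD : (Q - Matrix.diagonal fun i => ((precond G A ω i : ℝ) : ℂ)).PosSemidef)
    (x₀ : V → ℂ) (x : ℕ → V → ℂ) (hx0 : x 0 = x₀)
    (hxrec : ∀ n, x (n + 1) = (1 - Q⁻¹ ^ 2 * Aᴴ * A) *ᵥ x n) :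
    ∃ (u : V → ℂ) (r : ℝ), A *ᵥ u = 0 ∧ 0 ≤ r ∧ r < 1 ∧
      ∀ n, l2norm (Q *ᵥ (x n - u)) ≤ l2norm (Q *ᵥ x₀) * r ^ n :=
  stmt_0_general G A ω hω q Q hQdiag hQinv hPSD x₀ x hx0 hxrec
end

section
/- Let A be an N×N complex matrix and let Q be an invertible diagonal matrix with positive real diagonal entries such that Q² − A* A is positive semidefinite. Then for every x₀ ∈ ℂ^N, the sequence x_{n+1} = (I − Q^{-2} A* A) x_n converges to the vector u = Q^{-1} P (Q x₀), where P is the orthogonal projection of ℂ^N onto the subspace Q · ker(A) = { Q v : A v = 0 }; in particular A u = 0. -/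
/-!
Substituting `y = Q x` turns the iteration into the Landweber iteration `y ↦ (1 - B* B) y` for
`B = A Q⁻¹`, and `Q² - A* A ≥ 0` says exactly that `T = 1 - B* B` satisfies `0 ≤ T ≤ 1`.
The eigenvalues of such a `T` lie in `[0, 1]`, so `Tⁿ y` converges. Its limit is fixed by `T`,
and `y - lim` is orthogonal to the fixed space `ker (1 - T)` because the powers of the symmetric
map `T` preserve `⟪·, w⟫` for every fixed `w`; hence the limit is the orthogonal projection of `y`
onto `ker (1 - T) = ker (B* B) = ker B = Q · ker A`.
-/

open Matrix
open scoped ComplexOrder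
open Filter Topology InnerProductSpace

namespace LinearMap

variable {𝕜 E : Type*} [RCLike 𝕜] [NormedAddCommGroup E] [InnerProductSpace 𝕜 E]
  [FiniteDimensional 𝕜 E]

theorem IsSymmetric.starProjection_eq_of_tendsto_pow_apply {T : E →ₗ[𝕜] E}
    (hT : T.IsSymmetric) {x y : E} (h : Tendsto (fun n => (T ^ n) x) atTop (𝓝 y)) :
    (ker (1 - T)).starProjection x = y := by
  have hTy : T y = y := by
    refine tendsto_nhds_unique ((T.continuous_of_finiteDimensional.tendsto y).comp h) ?_
    simpa only [Function.comp_def, pow_succ', Module.End.mul_apply] using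
      h.comp (tendsto_add_atTop_nat 1)
  refine Submodule.eq_starProjection_of_mem_of_inner_eq_zero (by simp [hTy]) fun w hw => ?_
  rw [mem_ker, sub_apply, Module.End.one_apply, sub_eq_zero] at hw
  have hinner : ∀ n, ⟪(T ^ n) x, w⟫_𝕜 = ⟪x, w⟫_𝕜 := fun n => by
    rw [hT.pow n x w, Module.End.pow_apply, Function.iterate_fixed hw.symm]
  have hlim : ⟪x, w⟫_𝕜 = ⟪y, w⟫_𝕜 :=
    tendsto_nhds_unique (tendsto_const_nhds.congr fun n => (hinner n).symm)
      (h.inner tendsto_const_nhds)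
  rw [inner_sub_left, hlim, sub_self]

theorem IsPositive.exists_tendsto_pow_apply {T : E →ₗ[𝕜] E} (hT : T.IsPositive) (hT1 : T ≤ 1)
    (x : E) : ∃ y, Tendsto (fun n => (T ^ n) x) atTop (𝓝 y) := by
  obtain ⟨b, μ, hb⟩ : ∃ (b : OrthonormalBasis (Fin (Module.finrank 𝕜 E)) 𝕜 E) (μ : _ → ℝ),
      ∀ i, Module.End.HasEigenvector T (μ i) (b i) :=
    ⟨_, _, hT.isSymmetric.hasEigenvector_eigenvectorBasis rfl⟩
  have hre : ∀ i, RCLike.re ⟪T (b i), b i⟫_𝕜 = μ i := fun i => by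
    simp [(hb i).apply_eq_smul, inner_smul_left]
  have hμ : ∀ i, 0 ≤ μ i ∧ μ i ≤ 1 := fun i => by
    have h1 := hT1.2 (b i)
    rw [sub_apply, Module.End.one_apply, inner_sub_left, map_sub, hre] at h1
    exact ⟨hre i ▸ hT.2 (b i), by simpa [b.inner_eq_one] using h1⟩
  have hμpow : ∀ i, ∃ l, Tendsto (fun n => μ i ^ n) atTop (𝓝 l) := fun i =>
    ⟨_, tendsto_atTop_ciInf (fun _ _ => pow_le_pow_of_le_one (hμ i).1 (hμ i).2)
      ⟨0, by rintro _ ⟨n, rfl⟩; exact pow_nonneg (hμ i).1 n⟩⟩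
  choose l hl using hμpow
  have hx : ∀ n, (T ^ n) x = ∑ i, ((μ i : 𝕜) ^ n * ⟪b i, x⟫_𝕜) • b i := fun n => by
    conv_lhs => rw [← b.sum_repr' x]
    simp [(hb _).pow_apply, smul_smul, mul_comm]
  refine ⟨∑ i, ((l i : 𝕜) * ⟪b i, x⟫_𝕜) • b i, ?_⟩
  simp only [hx]
  refine tendsto_finsetSum _ fun i _ => (Tendsto.mul_const _ ?_).smul_const _
  simpa [Function.comp_def] using ((RCLike.continuous_ofReal (K := 𝕜)).tendsto _).comp (hl i)

theorem IsPositive.tendsto_pow_apply_starProjection {T : E →ₗ[𝕜] E} (hT : T.IsPositive)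
    (hT1 : T ≤ 1) (x : E) :
    Tendsto (fun n => (T ^ n) x) atTop (𝓝 ((ker (1 - T)).starProjection x)) := by
  obtain ⟨y, hy⟩ := hT.exists_tendsto_pow_apply hT1 x
  rwa [hT.isSymmetric.starProjection_eq_of_tendsto_pow_apply hy]

theorem tendsto_pow_one_sub_adjoint_comp_self_apply {F : Type*} [NormedAddCommGroup F]
    [InnerProductSpace 𝕜 F] [FiniteDimensional 𝕜 F] (B : E →ₗ[𝕜] F)
    (hB : B.adjoint ∘ₗ B ≤ 1) (x : E) :
    Tendsto (fun n => ((1 - B.adjoint ∘ₗ B : E →ₗ[𝕜] E) ^ n) x) atTop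
      (𝓝 ((ker B).starProjection x)) := by
  have hT1 : 1 - B.adjoint ∘ₗ B ≤ 1 := by
    rw [le_def, sub_sub_cancel]
    exact B.isPositive_adjoint_comp_self
  simpa [B.ker_adjoint_comp_self] using IsPositive.tendsto_pow_apply_starProjection hB hT1 x

end LinearMap

namespace Matrix

variable {𝕜 m n : Type*} [RCLike 𝕜] [Fintype n] [DecidableEq n]

theorem toEuclideanLin_one_sub_conjTranspose_mul_self [Fintype m] [DecidableEq m]
    (B : Matrix m n 𝕜) :
    toEuclideanLin (1 - Bᴴ * B) = 1 - (toEuclideanLin B).adjoint ∘ₗ toEuclideanLin B := by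
  rw [← toEuclideanLin_conjTranspose_eq_adjoint, ← toLpLin_mul_same, map_sub, toLpLin_one]
  rfl

theorem ker_toEuclideanLin_mul_inv (A : Matrix m n 𝕜) {Q : Matrix n n 𝕜} (hQ : IsUnit Q.det) :
    LinearMap.ker (toEuclideanLin (A * Q⁻¹)) =
      (LinearMap.ker (toEuclideanLin A)).map (toEuclideanLin Q) := by
  let e : EuclideanSpace 𝕜 n ≃ₗ[𝕜] EuclideanSpace 𝕜 n :=
    .ofLinearMap (toEuclideanLin Q) (toEuclideanLin Q⁻¹)
      (by simp [← toLpLin_mul_same, mul_nonsing_inv _ hQ])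
      (by simp [← toLpLin_mul_same, nonsing_inv_mul _ hQ])
  rw [toLpLin_mul_same, LinearMap.ker_comp]
  exact (Submodule.map_equiv_eq_comap_symm e _).symm

variable [Fintype m] {Q : Matrix n n 𝕜}

theorem IsHermitian.one_sub_conjTranspose_mul_self_mul_inv (hQ : Q.IsHermitian)
    (hQdet : IsUnit Q.det) (A : Matrix m n 𝕜) :
    1 - (A * Q⁻¹)ᴴ * (A * Q⁻¹) = Q⁻¹ᴴ * (Q ^ 2 - Aᴴ * A) * Q⁻¹ := by
  have hQinv : Q⁻¹ᴴ = Q⁻¹ := by rw [conjTranspose_nonsing_inv, hQ.eq]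
  simp [hQinv, sq, mul_sub, sub_mul, Matrix.mul_assoc, mul_nonsing_inv _ hQdet,
    nonsing_inv_mul _ hQdet]

theorem IsHermitian.one_sub_conjTranspose_mul_self_mul_inv_mul (hQ : Q.IsHermitian)
    (hQdet : IsUnit Q.det) (A : Matrix m n 𝕜) :
    (1 - (A * Q⁻¹)ᴴ * (A * Q⁻¹)) * Q = Q * (1 - Q⁻¹ ^ 2 * Aᴴ * A) := by
  have hQinv : Q⁻¹ᴴ = Q⁻¹ := by rw [conjTranspose_nonsing_inv, hQ.eq]
  simp [hQinv, sq, mul_sub, sub_mul, Matrix.mul_assoc, nonsing_inv_mul _ hQdet,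
    mul_nonsing_inv_cancel_left _ _ hQdet]

end Matrix

/-- Let `A` be an `N × N` complex matrix and `Q` an invertible diagonal
matrix with positive real diagonal entries such that `Q² - Aᴴ A` is positive semidefinite.
Then for every `x₀`, the sequence `x_{n+1} = (I - Q⁻² Aᴴ A) x_n` converges to
`u = Q⁻¹ P (Q x₀)`, where `P` is the orthogonal projection onto the subspace
`Q · ker(A)`; in particular `A u = 0`. -/
theorem stmt_4 {N : ℕ} (A : Matrix (Fin N) (Fin N) ℂ)
    (q : Fin N → ℝ) (hq : ∀ i, 0 < q i)
    (Q : Matrix (Fin N) (Fin N) ℂ)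
    (hQdiag : Q = Matrix.diagonal fun i => (q i : ℂ))
    (hPSD : (Q ^ 2 - Aᴴ * A).PosSemidef)
    (x₀ : EuclideanSpace ℂ (Fin N)) (x : ℕ → EuclideanSpace ℂ (Fin N))
    (hx0 : x 0 = x₀)
    (hxrec : ∀ n, x (n + 1) = Matrix.toEuclideanLin (1 - Q⁻¹ ^ 2 * Aᴴ * A) (x n)) :
    Filter.Tendsto x Filter.atTop
        (nhds (Matrix.toEuclideanLin Q⁻¹
          ((Submodule.orthogonalProjectionOnto
              ((LinearMap.ker (Matrix.toEuclideanLin A)).map (Matrix.toEuclideanLin Q))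
              (Matrix.toEuclideanLin Q x₀) : EuclideanSpace ℂ (Fin N))))) ∧
      Matrix.toEuclideanLin A
        (Matrix.toEuclideanLin Q⁻¹
          ((Submodule.orthogonalProjectionOnto
              ((LinearMap.ker (Matrix.toEuclideanLin A)).map (Matrix.toEuclideanLin Q))
              (Matrix.toEuclideanLin Q x₀) : EuclideanSpace ℂ (Fin N)))) = 0 := by
  have hQ : Q.IsHermitian := hQdiag ▸ isHermitian_diagonal_iff.mpr fun i => Complex.conj_ofReal _
  have hQdet : IsUnit Q.det := by
    rw [hQdiag, det_diagonal]
    exact (Finset.prod_ne_zero_iff.mpr fun i _ => Complex.ofReal_ne_zero.mpr (hq i).ne').isUnit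
  set B := toEuclideanLin (A * Q⁻¹)
  have hB : B.adjoint ∘ₗ B ≤ 1 := by
    rw [LinearMap.le_def, ← toEuclideanLin_one_sub_conjTranspose_mul_self,
      isPositive_toEuclideanLin_iff, hQ.one_sub_conjTranspose_mul_self_mul_inv hQdet]
    exact hPSD.conjTranspose_mul_mul_same Q⁻¹
  have hQx : ∀ n, toEuclideanLin Q (x n) = ((1 - B.adjoint ∘ₗ B) ^ n) (toEuclideanLin Q x₀) := by
    intro n
    induction n with
    | zero => rw [hx0, pow_zero, Module.End.one_apply]
    | succ n ih =>
      rw [hxrec, ← LinearMap.comp_apply, ← toLpLin_mul_same,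
        ← hQ.one_sub_conjTranspose_mul_self_mul_inv_mul hQdet, toLpLin_mul_same,
        LinearMap.comp_apply, ih, toEuclideanLin_one_sub_conjTranspose_mul_self,
        ← Module.End.mul_apply, ← pow_succ']
  have hx : ∀ n, x n = toEuclideanLin Q⁻¹ (toEuclideanLin Q (x n)) := fun n => by
    rw [← LinearMap.comp_apply, ← toLpLin_mul_same, nonsing_inv_mul _ hQdet, toLpLin_one,
      LinearMap.id_apply]
  have hP : ((LinearMap.ker (toEuclideanLin A)).map (toEuclideanLin Q)).starProjection =
      (LinearMap.ker B).starProjection :=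
    Submodule.starProjection_inj.mpr (ker_toEuclideanLin_mul_inv A hQdet).symm
  simp only [← Submodule.starProjection_apply, hP]
  refine ⟨?_, ?_⟩
  · refine (((toEuclideanLin Q⁻¹).continuous_of_finiteDimensional.tendsto _).comp
      (LinearMap.tendsto_pow_one_sub_adjoint_comp_self_apply B hB _)).congr fun n => ?_
    rw [Function.comp_apply, ← hQx, ← hx]
  · rw [← LinearMap.comp_apply, ← toLpLin_mul_same]
    exact LinearMap.mem_ker.mp ((LinearMap.ker B).starProjection_apply_mem _)
end

section
/- Let A be an N×N complex matrix with nontrivial kernel and let Q be an invertible diagonal matrix with positive real diagonal entries such that Q² − A* A is positive semidefinite. For x₀ ∈ ℂ^N, the limit u of the sequence x_{n+1} = (I − Q^{-2} A* A) x_n is the zero vector if and only if Q x₀ is orthogonal to the subspace Q · ker(A) = { Q v : A v = 0 }; in particular, the set of initial vectors x₀ for which the limit is zero is a proper linear subspace of ℂ^N. -/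
/-!
In the coordinates `y = Q x` the iteration becomes the Landweber iteration `y ↦ y - C* C y` for
`C = A Q⁻¹`, whose kernel is `Q · ker A`. Every step changes `y` by an element of
`range C* ⊆ (ker C)ᗮ`, and the limit is a fixed point, hence lies in `ker C`: the limit is the
orthogonal projection of `Q x₀` onto `ker C`, which vanishes iff `Q x₀ ⊥ ker C`. The hypothesis
`Q² ≥ A* A` says `0 ≤ 1 - C* C ≤ 1`, so by the spectral theorem the powers of `1 - C* C`, and
hence the iterates, converge for every initial vector.
-/

open Filter Topology
open scoped InnerProduct

theorem exists_tendsto_pow_of_nonneg_of_le_one {r : ℝ} (h0 : 0 ≤ r) (h1 : r ≤ 1) :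
    ∃ l, Tendsto (fun n : ℕ => r ^ n) atTop (𝓝 l) := by
  rcases h1.eq_or_lt with rfl | hlt
  · exact ⟨1, by simp⟩
  · exact ⟨0, tendsto_pow_atTop_nhds_zero_of_lt_one h0 hlt⟩

section PowerIteration

variable {𝕜 E : Type*} [RCLike 𝕜] [NormedAddCommGroup E] [InnerProductSpace 𝕜 E]
  [FiniteDimensional 𝕜 E]

theorem LinearMap.IsPositive.exists_tendsto_pow_apply_s5 {T : E →ₗ[𝕜] E} (hT : T.IsPositive)
    (hT1 : (1 - T).IsPositive) (x : E) : ∃ u, Tendsto (fun n => (T ^ n) x) atTop (𝓝 u) := by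
  set e := hT.isSymmetric.eigenvectorBasis rfl
  set μ := hT.isSymmetric.eigenvalues rfl
  have hμ1 : ∀ i, μ i ≤ 1 := fun i => by
    simpa [e, μ, inner_sub_left, inner_smul_left, ← sub_nonneg] using hT1.re_inner_nonneg_left (e i)
  have hpow : ∀ n, (T ^ n) x = ∑ i, (((μ i ^ n : ℝ) : 𝕜) * inner 𝕜 (e i) x) • e i := fun n => by
    conv_lhs => rw [← e.sum_repr' x]
    simp [map_sum, map_smul, ((hT.isSymmetric.hasEigenvector_eigenvectorBasis rfl _).pow_apply n),
      smul_smul, mul_comm, e, μ]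
  choose l hl using fun i =>
    exists_tendsto_pow_of_nonneg_of_le_one (hT.nonneg_eigenvalues rfl i) (hμ1 i)
  refine ⟨∑ i, ((l i : 𝕜) * inner 𝕜 (e i) x) • e i, ?_⟩
  simp_rw [hpow]
  refine tendsto_finsetSum _ fun i _ => ?_
  exact (((RCLike.continuous_ofReal.tendsto _).comp (hl i)).mul_const _).smul_const _

end PowerIteration

section Landweber

variable {𝕜 E F : Type*} [RCLike 𝕜] [NormedAddCommGroup E] [InnerProductSpace 𝕜 E] [CompleteSpace E]
  [NormedAddCommGroup F] [InnerProductSpace 𝕜 F] [CompleteSpace F]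

theorem ContinuousLinearMap.adjoint_apply_mem_orthogonal_ker (c : E →L[𝕜] F) (z : F) :
    (c†) z ∈ c.kerᗮ := by
  rw [c.orthogonal_ker]
  exact Submodule.le_topologicalClosure _ ⟨z, rfl⟩

variable (c : E →L[𝕜] F) {y : ℕ → E} {w : E}

theorem mem_ker_of_tendsto_landweber (hy : ∀ n, y (n + 1) = y n - (c† ∘L c) (y n))
    (hw : Tendsto y atTop (𝓝 w)) : w ∈ c.ker := by
  have hstep : Tendsto (fun n => y n - (c† ∘L c) (y n)) atTop (𝓝 (w - (c† ∘L c) w)) :=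
    hw.sub ((c†.continuous.comp c.continuous).tendsto w |>.comp hw)
  have hfix : w - (c† ∘L c) w = w :=
    tendsto_nhds_unique (hstep.congr fun n => (hy n).symm) ((tendsto_add_atTop_iff_nat 1).mpr hw)
  rw [← c.ker_adjoint_comp_self, LinearMap.mem_ker]
  exact sub_eq_self.mp hfix

theorem sub_mem_orthogonal_ker_of_tendsto_landweber (hy : ∀ n, y (n + 1) = y n - (c† ∘L c) (y n))
    (hw : Tendsto y atTop (𝓝 w)) : y 0 - w ∈ c.kerᗮ := by
  have hmem : ∀ n, y 0 - y n ∈ c.kerᗮ := by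
    intro n
    induction n with
    | zero => simp
    | succ n ih =>
      rw [hy n, sub_sub_eq_add_sub, add_comm, add_sub_assoc]
      exact add_mem (c.adjoint_apply_mem_orthogonal_ker _) ih
  exact (Submodule.isClosed_orthogonal _).mem_of_tendsto (tendsto_const_nhds.sub hw)
    (Eventually.of_forall hmem)

theorem landweber_limit_eq_zero_iff (hy : ∀ n, y (n + 1) = y n - (c† ∘L c) (y n))
    (hw : Tendsto y atTop (𝓝 w)) : w = 0 ↔ y 0 ∈ c.kerᗮ := by
  have hker := mem_ker_of_tendsto_landweber c hy hw
  have horth := sub_mem_orthogonal_ker_of_tendsto_landweber c hy hw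
  refine ⟨by rintro rfl; simpa using horth, fun h0 => ?_⟩
  have hw' : w ∈ c.kerᗮ := by simpa using Submodule.sub_mem _ h0 horth
  simpa [Submodule.inf_orthogonal_eq_bot] using Submodule.mem_inf.mpr ⟨hker, hw'⟩

noncomputable def weightedLandweber (a : E →L[𝕜] F) (p : E →L[𝕜] E) : E →L[𝕜] E :=
  1 - p ^ 2 * (a† ∘L a)

section Weighted

variable (a : E →L[𝕜] F) {p q : E →L[𝕜] E}

theorem adjoint_comp_self_comp_of_isSelfAdjoint (hp : IsSelfAdjoint p) :
    (a ∘L p)† ∘L (a ∘L p) = p * (a† ∘L a) * p := by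
  rw [ContinuousLinearMap.adjoint_comp, ← ContinuousLinearMap.star_eq_adjoint p, hp.star_eq]
  rfl

theorem semiconjBy_weightedLandweber (hp : IsSelfAdjoint p) (hpq : p * q = 1) (hqp : q * p = 1) :
    SemiconjBy q (weightedLandweber a p) (1 - (a ∘L p)† ∘L (a ∘L p)) := by
  rw [SemiconjBy, weightedLandweber, adjoint_comp_self_comp_of_isSelfAdjoint a hp]
  calc q * (1 - p ^ 2 * (a† ∘L a)) = q - q * p * p * (a† ∘L a) := by noncomm_ring
    _ = q - p * (a† ∘L a) * (p * q) := by rw [hqp, hpq]; noncomm_ring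
    _ = (1 - p * (a† ∘L a) * p) * q := by noncomm_ring

omit [CompleteSpace E] [CompleteSpace F] in
theorem ker_comp_eq_map_ker (hpq : p * q = 1) (hqp : q * p = 1) :
    (a ∘L p).ker = a.ker.map (q : E →ₗ[𝕜] E) := by
  ext v
  simp only [LinearMap.mem_ker, Submodule.mem_map]
  constructor
  · intro hv
    exact ⟨p v, hv, congr($hqp v)⟩
  · rintro ⟨w, hw, rfl⟩
    change a (p (q w)) = 0
    rwa [show p (q w) = w from congr($hpq w)]

theorem isPositive_one_sub_adjoint_comp_self_comp (hp : IsSelfAdjoint p) (hpq : p * q = 1)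
    (hqp : q * p = 1) (hpos : (q ^ 2 - a† ∘L a).IsPositive) :
    (1 - (a ∘L p)† ∘L (a ∘L p)).IsPositive := by
  have hconj : p * (q ^ 2 - a† ∘L a) * p = 1 - p * (a† ∘L a) * p := by
    rw [mul_sub, sub_mul, pow_two, ← mul_assoc, hpq, one_mul, hqp]
  rw [adjoint_comp_self_comp_of_isSelfAdjoint a hp, ← hconj]
  have h := hpos.conj_adjoint p
  rw [← ContinuousLinearMap.star_eq_adjoint p, hp.star_eq] at h
  exact h

theorem weightedLandweber_limit_eq_zero_iff (hp : IsSelfAdjoint p) (hpq : p * q = 1)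
    (hqp : q * p = 1) {x : ℕ → E} {u : E} (hx : ∀ n, x (n + 1) = weightedLandweber a p (x n))
    (hu : Tendsto x atTop (𝓝 u)) : u = 0 ↔ q (x 0) ∈ (a.ker.map (q : E →ₗ[𝕜] E))ᗮ := by
  have hy : ∀ n, q (x (n + 1)) = q (x n) - ((a ∘L p)† ∘L (a ∘L p)) (q (x n)) := fun n => by
    rw [hx n]
    exact DFunLike.congr_fun (semiconjBy_weightedLandweber a hp hpq hqp) (x n)
  have hqu : q u = 0 ↔ u = 0 := by
    refine ⟨fun h => ?_, fun h => by rw [h, map_zero]⟩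
    simpa [h] using (DFunLike.congr_fun hpq u).symm
  rw [← hqu, ← ker_comp_eq_map_ker a hpq hqp]
  exact landweber_limit_eq_zero_iff (a ∘L p) hy ((q.continuous.tendsto u).comp hu)

theorem tendsto_weightedLandweber_pow_apply_zero_iff [FiniteDimensional 𝕜 E] (hp : IsSelfAdjoint p)
    (hpq : p * q = 1) (hqp : q * p = 1) (hpos : (q ^ 2 - a† ∘L a).IsPositive) (x₀ : E) :
    Tendsto (fun n => (weightedLandweber a p ^ n) x₀) atTop (𝓝 0) ↔
      q x₀ ∈ (a.ker.map (q : E →ₗ[𝕜] E))ᗮ := by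
  set M := 1 - (a ∘L p)† ∘L (a ∘L p)
  have hM : M.IsPositive := isPositive_one_sub_adjoint_comp_self_comp a hp hpq hqp hpos
  have hM1 : (1 - M).IsPositive := by
    simpa [M] using ContinuousLinearMap.isPositive_adjoint_comp_self (a ∘L p)
  obtain ⟨w, hw⟩ := hM.toLinearMap.exists_tendsto_pow_apply_s5 hM1.toLinearMap (q x₀)
  have hpow : ∀ n, (weightedLandweber a p ^ n) x₀ = p ((M ^ n) (q x₀)) := fun n => by
    have hsemi := (semiconjBy_weightedLandweber a hp hpq hqp).pow_right n
    calc (weightedLandweber a p ^ n) x₀ = (p * (q * weightedLandweber a p ^ n)) x₀ := by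
          rw [← mul_assoc, hpq, one_mul]
      _ = p ((M ^ n) (q x₀)) := by rw [hsemi.eq]; rfl
  have hconv : Tendsto (fun n => (weightedLandweber a p ^ n) x₀) atTop (𝓝 (p w)) := by
    simp_rw [hpow]
    simp_rw [← ContinuousLinearMap.toLinearMap_pow, ContinuousLinearMap.coe_coe] at hw
    exact (p.continuous.tendsto w).comp hw
  refine Iff.trans ⟨fun h => tendsto_nhds_unique hconv h, fun h => h ▸ hconv⟩ ?_
  exact weightedLandweber_limit_eq_zero_iff a hp hpq hqp (fun n => by rw [pow_succ']; rfl) hconv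

end Weighted

end Landweber

theorem Submodule.comap_orthogonal_map_ne_top {𝕜 E F : Type*} [RCLike 𝕜] [NormedAddCommGroup F]
    [InnerProductSpace 𝕜 F] [AddCommGroup E] [Module 𝕜 E] {K : Submodule 𝕜 E} (hK : K ≠ ⊥)
    {f : E →ₗ[𝕜] F} (hf : Function.Injective f) : (K.map f)ᗮ.comap f ≠ ⊤ := by
  obtain ⟨v, hv, hv0⟩ := (Submodule.ne_bot_iff K).mp hK
  intro htop
  have hfv : f v ∈ K.map f ⊓ (K.map f)ᗮ :=
    ⟨Submodule.mem_map_of_mem hv, Submodule.mem_comap.mp (htop ▸ Submodule.mem_top)⟩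
  rw [Submodule.inf_orthogonal_eq_bot, Submodule.mem_bot] at hfv
  exact hv0 (hf (hfv.trans (map_zero f).symm))

open Matrix
open scoped ComplexOrder

section Matrix

variable {𝕜 n : Type*} [RCLike 𝕜] [Fintype n] [DecidableEq n]

theorem Matrix.PosSemidef.isPositive_toEuclideanCLM {M : Matrix n n 𝕜} (hM : M.PosSemidef) :
    (toEuclideanCLM (n := n) (𝕜 := 𝕜) M).IsPositive :=
  isPositive_toEuclideanLin_iff.mpr hM

theorem Matrix.toEuclideanCLM_one_sub_inv_sq_mul (A Q : Matrix n n 𝕜) :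
    toEuclideanCLM (n := n) (𝕜 := 𝕜) (1 - Q⁻¹ ^ 2 * Aᴴ * A) =
      weightedLandweber (toEuclideanCLM (n := n) (𝕜 := 𝕜) A)
        (toEuclideanCLM (n := n) (𝕜 := 𝕜) Q⁻¹) := by
  rw [map_sub, map_one, map_mul, map_mul, map_pow, ← star_eq_conjTranspose, map_star,
    ContinuousLinearMap.star_eq_adjoint, mul_assoc]
  rfl

end Matrix

/-- Let `A` be an `N × N` complex matrix with nontrivial kernel and `Q` an
invertible diagonal matrix with positive real diagonal entries such that `Q² - Aᴴ A` is
positive semidefinite.  For `x₀ ∈ ℂ^N`, the limit `u` of the sequence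
`x_{n+1} = (I - Q⁻² Aᴴ A) x_n` is the zero vector if and only if `Q x₀` is orthogonal to
the subspace `Q · ker(A)`; in particular, the set of initial vectors `x₀` for which the
limit is zero is a proper linear subspace of `ℂ^N`. -/
theorem stmt_5 {N : ℕ} (A : Matrix (Fin N) (Fin N) ℂ)
    (q : Fin N → ℝ) (hq : ∀ i, 0 < q i)
    (Q : Matrix (Fin N) (Fin N) ℂ)
    (hQdiag : Q = Matrix.diagonal fun i => (q i : ℂ))
    (hker : LinearMap.ker (Matrix.toEuclideanLin A) ≠ ⊥)
    (hPSD : (Q ^ 2 - Aᴴ * A).PosSemidef) :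
    (∀ (x₀ : EuclideanSpace ℂ (Fin N)) (x : ℕ → EuclideanSpace ℂ (Fin N))
        (u : EuclideanSpace ℂ (Fin N)),
        x 0 = x₀ →
        (∀ n, x (n + 1) = Matrix.toEuclideanLin (1 - Q⁻¹ ^ 2 * Aᴴ * A) (x n)) →
        Filter.Tendsto x Filter.atTop (nhds u) →
        (u = 0 ↔ Matrix.toEuclideanLin Q x₀ ∈
            ((LinearMap.ker (Matrix.toEuclideanLin A)).map (Matrix.toEuclideanLin Q))ᗮ)) ∧
      ∃ S : Submodule ℂ (EuclideanSpace ℂ (Fin N)), S ≠ ⊤ ∧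
        (S : Set (EuclideanSpace ℂ (Fin N))) =
          {x₀ | Filter.Tendsto
            (fun n => Matrix.toEuclideanLin ((1 - Q⁻¹ ^ 2 * Aᴴ * A) ^ n) x₀)
            Filter.atTop (nhds 0)} := by
  set opA := toEuclideanCLM (n := Fin N) (𝕜 := ℂ) A
  set opQ := toEuclideanCLM (n := Fin N) (𝕜 := ℂ) Q
  set opQinv := toEuclideanCLM (n := Fin N) (𝕜 := ℂ) Q⁻¹
  have hQ : Q.IsHermitian := hQdiag ▸ isHermitian_diagonal_of_self_adjoint _
    (funext fun i => Complex.conj_ofReal (q i))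
  have hdet : IsUnit Q.det := by
    rw [hQdiag, det_diagonal, isUnit_iff_ne_zero]
    exact Finset.prod_ne_zero_iff.2 fun i _ => Complex.ofReal_ne_zero.2 (hq i).ne'
  have hinv_mul : opQinv * opQ = 1 := by rw [← map_mul, nonsing_inv_mul _ hdet, map_one]
  have hmul_inv : opQ * opQinv = 1 := by rw [← map_mul, mul_nonsing_inv _ hdet, map_one]
  have hQinv : IsSelfAdjoint opQinv := hQ.inv.isSelfAdjoint.map _
  have hpos : (opQ ^ 2 - opA† ∘L opA).IsPositive := by
    have h := hPSD.isPositive_toEuclideanCLM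
    rw [map_sub, map_pow, map_mul, ← star_eq_conjTranspose, map_star,
      ContinuousLinearMap.star_eq_adjoint] at h
    exact h
  have hB := toEuclideanCLM_one_sub_inv_sq_mul A Q
  have hBpow : ∀ n x, toEuclideanLin ((1 - Q⁻¹ ^ 2 * Aᴴ * A) ^ n) x =
      (weightedLandweber opA opQinv ^ n) x := fun n x => by
    rw [← hB, ← map_pow]
    rfl
  refine ⟨fun x₀ x u h0 hx hu => ?_,
    ((LinearMap.ker (toEuclideanLin A)).map (toEuclideanLin Q))ᗮ.comap (toEuclideanLin Q), ?_, ?_⟩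
  · subst h0
    exact weightedLandweber_limit_eq_zero_iff opA hQinv hinv_mul hmul_inv
      (fun n => (hx n).trans congr($hB (x n))) hu
  · exact Submodule.comap_orthogonal_map_ne_top hker
      (Function.LeftInverse.injective (g := opQinv) fun v => congr($hinv_mul v))
  · ext x₀
    simp only [SetLike.mem_coe, Submodule.mem_comap, Set.mem_ofPred_eq, hBpow]
    exact (tendsto_weightedLandweber_pow_apply_zero_iff opA hQinv hinv_mul hmul_inv hpos x₀).symm
end

section
/- Let A be an N×N complex matrix with nontrivial kernel and let Q be an invertible diagonal matrix with positive real diagonal entries such that Q² − A* A is positive semidefinite. Then the set of real vectors x₀ ∈ ℝ^N (viewed inside ℂ^N) for which the limit of the sequence x_{n+1} = (I − Q^{-2} A* A) x_n is the zero vector has Lebesgue measure zero in ℝ^N; consequently, if the entries of x₀ are i.i.d. uniformly distributed on [0,1], then almost surely the limit is a nonzero eigenvector of A associated with the eigenvalue zero. -/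
/-!
Conjugation by `Q` turns the iteration matrix `1 - Q⁻² Aᴴ A` into the Hermitian matrix
`C = 1 - Rᴴ R` with `R = A Q⁻¹`, and `Q² - Aᴴ A ≥ 0` says exactly that `0 ≤ C ≤ 1`. So the
spectrum of `C` lies in `[0, 1]`, the powers of `C` converge to some `P`, and `C P = P` gives
`Rᴴ R P = 0`, hence `R P = 0`. Thus the iterates converge to `L x₀` for a matrix `L` with
`A L = 0`. As `L` fixes the kernel of `A`, `L ≠ 0`, so the real `x₀` with `L x₀ = 0` form a
proper subspace of `ℝ^N`, which is Lebesgue-null, and the uniform distribution on the cube is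
absolutely continuous with respect to Lebesgue measure.
-/

open Matrix Filter Topology MeasureTheory
open scoped ComplexOrder MatrixOrder

lemma exists_tendsto_pow_of_mem_Ioc {x : ℝ} (hx : x ∈ Set.Ioc (-1) 1) :
    ∃ y, Tendsto (x ^ ·) atTop (𝓝 y) := by
  rcases hx.2.eq_or_lt with rfl | hlt
  · exact ⟨1, by simp⟩
  · exact ⟨0, tendsto_pow_atTop_nhds_zero_of_abs_lt_one (abs_lt.2 ⟨hx.1, hlt⟩)⟩

lemma mul_eq_of_tendsto_pow {R : Type*} [Semiring R] [TopologicalSpace R]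
    [IsTopologicalSemiring R] [T2Space R] {a p : R} (h : Tendsto (a ^ ·) atTop (𝓝 p)) :
    a * p = p := by
  refine tendsto_nhds_unique ((h.const_mul a).congr fun n => (pow_succ' a n).symm) ?_
  exact h.comp (tendsto_add_atTop_nat 1)

namespace Matrix

variable {𝕜 : Type*} [RCLike 𝕜] {m n : Type*} [Fintype n] [DecidableEq n]

lemma IsHermitian.exists_tendsto_pow {A : Matrix n n 𝕜} (hA : A.IsHermitian)
    (h : spectrum ℝ A ⊆ Set.Ioc (-1) 1) : ∃ P, Tendsto (A ^ ·) atTop (𝓝 P) := by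
  choose y hy using fun i =>
    exists_tendsto_pow_of_mem_Ioc (h (hA.eigenvalues_mem_spectrum_real i))
  let U : Matrix n n 𝕜 := hA.eigenvectorUnitary
  refine ⟨U * diagonal (fun i => (y i : 𝕜)) * star U, ?_⟩
  have hpow (k : ℕ) :
      A ^ k = U * diagonal (fun i => ((hA.eigenvalues i ^ k : ℝ) : 𝕜)) * star U := by
    conv_lhs => rw [hA.spectral_theorem]
    rw [← map_pow, diagonal_pow, Unitary.conjStarAlgAut_apply]
    simp [Pi.pow_def, U]
  simp_rw [hpow]
  have hcont : Continuous fun M : Matrix n n 𝕜 => U * M * star U := by fun_prop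
  refine (hcont.tendsto _).comp (continuous_id.matrix_diagonal.tendsto _ |>.comp ?_)
  exact tendsto_pi_nhds.2 fun i => (RCLike.continuous_ofReal.tendsto _).comp (hy i)

lemma PosSemidef.spectrum_subset_Icc {A : Matrix n n 𝕜} (hA : A.PosSemidef)
    (h1 : (1 - A).PosSemidef) : spectrum ℝ A ⊆ Set.Icc 0 1 := fun x hx =>
  ⟨spectrum_nonneg_of_nonneg hA.nonneg hx,
    (le_algebraMap_iff_spectrum_le hA.isHermitian).1 (by rwa [map_one]) x hx⟩

lemma exists_tendsto_pow_one_sub_conjTranspose_mul_self [Fintype m] (R : Matrix m n 𝕜)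
    (h : (1 - Rᴴ * R).PosSemidef) :
    ∃ P, Tendsto ((1 - Rᴴ * R) ^ ·) atTop (𝓝 P) ∧ R * P = 0 := by
  have hR : (1 - (1 - Rᴴ * R)).PosSemidef := by
    simpa using posSemidef_conjTranspose_mul_self R
  obtain ⟨P, hP⟩ := h.isHermitian.exists_tendsto_pow fun x hx =>
    have hx' := h.spectrum_subset_Icc hR hx
    ⟨by linarith [hx'.1], hx'.2⟩
  refine ⟨P, hP, ?_⟩
  have hRRP : Rᴴ * R * P = 0 := by
    simpa [sub_mul] using mul_eq_of_tendsto_pow hP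
  rw [← conjTranspose_mul_self_eq_zero, conjTranspose_mul, Matrix.mul_assoc,
    ← Matrix.mul_assoc Rᴴ, hRRP, Matrix.mul_zero]

lemma tendsto_pow_mulVec {M L : Matrix n n 𝕜} (h : Tendsto (M ^ ·) atTop (𝓝 L)) (x : n → 𝕜) :
    Tendsto (fun k => (M ^ k) *ᵥ x) atTop (𝓝 (L *ᵥ x)) :=
  ((continuous_id.matrix_mulVec continuous_const).tendsto L).comp h

lemma mulVec_eq_of_tendsto_pow {M L : Matrix n n 𝕜} (h : Tendsto (M ^ ·) atTop (𝓝 L))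
    {v : n → 𝕜} (hv : M *ᵥ v = v) : L *ᵥ v = v := by
  have hpow (k : ℕ) : (M ^ k) *ᵥ v = v := by
    induction k with
    | zero => simp
    | succ k ih => rw [pow_succ, ← mulVec_mulVec, hv, ih]
  exact tendsto_nhds_unique (tendsto_pow_mulVec h v) (by simp [hpow])

lemma exists_tendsto_pow_one_sub_inv_sq_mul_conjTranspose_mul [Fintype m] (A : Matrix m n 𝕜)
    {Q : Matrix n n 𝕜} (hQ : Q.IsHermitian) (hQu : IsUnit Q.det)
    (h : (Q ^ 2 - Aᴴ * A).PosSemidef) :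
    ∃ L, Tendsto ((1 - Q⁻¹ ^ 2 * Aᴴ * A) ^ ·) atTop (𝓝 L) ∧ A * L = 0 := by
  set R := A * Q⁻¹
  have hRR : Rᴴ * R = Q⁻¹ * (Aᴴ * A) * Q⁻¹ := by
    simp only [R, conjTranspose_mul, hQ.inv.eq, Matrix.mul_assoc]
  have hC : 1 - Rᴴ * R = Q⁻¹ᴴ * (Q ^ 2 - Aᴴ * A) * Q⁻¹ := by
    rw [hQ.inv.eq, hRR, Matrix.mul_sub, Matrix.sub_mul, sq, ← Matrix.mul_assoc Q⁻¹ Q Q,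
      nonsing_inv_mul _ hQu, Matrix.one_mul, mul_nonsing_inv _ hQu]
  obtain ⟨P, hP, hRP⟩ :=
    exists_tendsto_pow_one_sub_conjTranspose_mul_self R (hC ▸ h.conjTranspose_mul_mul_same Q⁻¹)
  have hconj : SemiconjBy Q (1 - Q⁻¹ ^ 2 * Aᴴ * A) (1 - Rᴴ * R) := by
    simp only [SemiconjBy, hRR, Matrix.mul_sub, Matrix.sub_mul, Matrix.mul_one, Matrix.one_mul,
      sq, Matrix.mul_assoc, nonsing_inv_mul _ hQu, mul_nonsing_inv_cancel_left _ _ hQu]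
  have hpow (k : ℕ) : (1 - Q⁻¹ ^ 2 * Aᴴ * A) ^ k = Q⁻¹ * (1 - Rᴴ * R) ^ k * Q := by
    rw [Matrix.mul_assoc Q⁻¹, ← (hconj.pow_right k).eq, ← Matrix.mul_assoc Q⁻¹ Q,
      nonsing_inv_mul _ hQu, Matrix.one_mul]
  refine ⟨Q⁻¹ * P * Q, ?_, ?_⟩
  · simp_rw [hpow]
    exact ((by fun_prop : Continuous fun M : Matrix n n 𝕜 => Q⁻¹ * M * Q).tendsto P).comp hP
  · rw [← Matrix.mul_assoc, ← Matrix.mul_assoc, hRP, Matrix.zero_mul]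

end Matrix

lemma volume_setOf_mulVec_ofReal_eq_zero {𝕜 : Type*} [RCLike 𝕜] {m n : Type*} [Fintype n]
    {L : Matrix m n 𝕜} (hL : L ≠ 0) :
    volume {y : n → ℝ | L *ᵥ (fun i => (y i : 𝕜)) = 0} = 0 := by
  classical
  let f : (n → ℝ) →ₗ[ℝ] m → 𝕜 := L.mulVecLin.restrictScalars ℝ ∘ₗ
    LinearMap.compLeft (RCLike.ofRealAm (K := 𝕜)).toLinearMap n
  have hf : LinearMap.ker f ≠ ⊤ := by
    refine fun htop => hL (Matrix.ext fun i j => ?_)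
    have hj : L *ᵥ (fun k => ((Pi.single j 1 : n → ℝ) k : 𝕜)) = 0 :=
      LinearMap.congr_fun (LinearMap.ker_eq_top.1 htop) (Pi.single j 1)
    simpa [mulVec, dotProduct, Pi.single_apply] using congrFun hj i
  exact Measure.addHaar_submodule volume _ hf

lemma pi_restrict_Icc_eq_one_of_volume_compl_eq_zero {ι : Type*} [Fintype ι]
    {s : Set (ι → ℝ)} (hs : volume sᶜ = 0) :
    Measure.pi (fun _ : ι => volume.restrict (Set.Icc (0 : ℝ) 1)) s = 1 := by
  have hsc : Measure.pi (fun _ : ι => volume.restrict (Set.Icc (0 : ℝ) 1)) sᶜ = 0 := by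
    rw [← Measure.restrict_pi_pi, ← volume_pi]
    exact nonpos_iff_eq_zero.1 ((Measure.restrict_apply_le _ _).trans hs.le)
  rw [measure_congr (ae_eq_univ.2 hsc), Measure.pi_univ]
  simp

/-- Let `A` be an `N × N` complex matrix with nontrivial kernel and `Q` an
invertible diagonal matrix with positive real diagonal entries such that `Q² - Aᴴ A` is
positive semidefinite.  Then the set of real vectors `x₀ ∈ ℝ^N` (viewed inside `ℂ^N`) for
which the limit of the sequence `x_{n+1} = (I - Q⁻² Aᴴ A) x_n` is the zero vector has
Lebesgue measure zero in `ℝ^N`; consequently, if the entries of `x₀` are i.i.d. uniformly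
distributed on `[0,1]`, then almost surely the limit is a nonzero eigenvector of `A`
associated with the eigenvalue zero. -/
theorem stmt_6 {N : ℕ} (A : Matrix (Fin N) (Fin N) ℂ)
    (q : Fin N → ℝ) (hq : ∀ i, 0 < q i)
    (Q : Matrix (Fin N) (Fin N) ℂ)
    (hQdiag : Q = Matrix.diagonal fun i => (q i : ℂ))
    (hker : ∃ v : Fin N → ℂ, v ≠ 0 ∧ A *ᵥ v = 0)
    (hPSD : (Q ^ 2 - Aᴴ * A).PosSemidef) :
    MeasureTheory.volume {y : Fin N → ℝ |
        Filter.Tendsto (fun n => ((1 - Q⁻¹ ^ 2 * Aᴴ * A) ^ n) *ᵥ fun i => (y i : ℂ))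
          Filter.atTop (nhds 0)} = 0 ∧
      (MeasureTheory.Measure.pi fun _ : Fin N =>
          MeasureTheory.volume.restrict (Set.Icc (0 : ℝ) 1))
        {y : Fin N → ℝ | ∃ u : Fin N → ℂ,
          Filter.Tendsto (fun n => ((1 - Q⁻¹ ^ 2 * Aᴴ * A) ^ n) *ᵥ fun i => (y i : ℂ))
            Filter.atTop (nhds u) ∧ u ≠ 0 ∧ A *ᵥ u = 0} = 1 := by
  have hQ : Q.IsHermitian := hQdiag ▸ isHermitian_diagonal_of_self_adjoint _
    (funext fun i => Complex.conj_ofReal (q i))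
  have hQu : IsUnit Q.det := by
    rw [hQdiag, det_diagonal]
    exact IsUnit.mk0 _ (Finset.prod_ne_zero_iff.2 fun i _ => Complex.ofReal_ne_zero.2 (hq i).ne')
  obtain ⟨L, hL, hAL⟩ := exists_tendsto_pow_one_sub_inv_sq_mul_conjTranspose_mul A hQ hQu hPSD
  obtain ⟨v, hv0, hAv⟩ := hker
  have hLv : L *ᵥ v = v := mulVec_eq_of_tendsto_pow hL (by
    rw [sub_mulVec, one_mulVec, ← mulVec_mulVec, hAv, mulVec_zero, sub_zero])
  have hnull : volume {y : Fin N → ℝ | L *ᵥ (fun i => (y i : ℂ)) = 0} = 0 :=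
    volume_setOf_mulVec_ofReal_eq_zero fun h => hv0 (by rw [← hLv, h, zero_mulVec])
  refine ⟨?_, pi_restrict_Icc_eq_one_of_volume_compl_eq_zero
    (measure_mono_null (fun y hy => ?_) hnull)⟩
  · convert hnull using 2
    ext y
    exact ⟨tendsto_nhds_unique (tendsto_pow_mulVec hL _), fun h => h ▸ tendsto_pow_mulVec hL _⟩
  · by_contra hLy
    exact hy ⟨_, tendsto_pow_mulVec hL _, hLy, by rw [mulVec_mulVec, hAL, zero_mulVec]⟩
end

section
/- Let H be an N×N Hermitian complex matrix with minimal eigenvalue λ_min, and let Q be an invertible diagonal matrix with real diagonal entries satisfying Q(i,i) ≥ Σ_j |H(i,j) − λ_min δ(i,j)| for every index i, where δ is the Kronecker delta. Then for every initial vector x₀ ∈ ℂ^N, the sequence defined by x_{n+1} = x_n − Q^{-1}(H − λ_min I) x_n converges exponentially to a vector u satisfying H u = λ_min u; precisely, there exist u ∈ ℂ^N with H u = λ_min u and r ∈ [0,1) such that ‖Q^{1/2}(x_n − u)‖₂ ≤ ‖Q^{1/2} x₀‖₂ · rⁿ for all n ≥ 0. -/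
/-!
Write `A = H - λ_min I` and `D = Q^{1/2}`. The eigenvalue bound makes `A` positive semidefinite,
and the row-sum condition gives `A ≤ Q` in the Loewner order (Schur test). Hence
`B = D⁻¹ A D⁻¹` satisfies `0 ≤ B ≤ 1`, and in the variables `y = D x` the iteration is
`y ↦ (1 - B) y`, a self-adjoint map with spectrum in `[0, 1]`. In an orthonormal eigenbasis the
components along the eigenvalue `1` stay fixed, and all other components shrink at least by the
factor `r < 1`, the largest eigenvalue different from `1`. The fixed part is `D u`, and `B D u = 0`
says `A u = 0`.
-/

open Matrix
open scoped ComplexOrder MatrixOrder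

theorem l2norm_eq_norm_toLp {V : Type*} [Fintype V] (y : V → ℂ) :
    l2norm y = ‖WithLp.toLp 2 y‖ := by
  rw [EuclideanSpace.norm_eq]
  rfl

theorem exists_nonneg_lt_one_forall_le {ι : Type*} [Finite ι] {f : ι → ℝ} (hf : ∀ i, f i < 1) :
    ∃ r, 0 ≤ r ∧ r < 1 ∧ ∀ i, f i ≤ r := by
  cases isEmpty_or_nonempty ι
  · exact ⟨0, le_rfl, one_pos, isEmptyElim⟩
  · obtain ⟨i₀, hi₀⟩ := Finite.exists_max f
    exact ⟨max 0 (f i₀), le_max_left _ _, max_lt one_pos (hf i₀),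
      fun i => (hi₀ i).trans (le_max_right _ _)⟩

theorem sum_sum_mul_mul_le_of_symm {ι : Type*} [Fintype ι] {a : ι → ι → ℝ}
    (ha : ∀ i j, 0 ≤ a i j) (hsymm : ∀ i j, a i j = a j i) (b : ι → ℝ) :
    ∑ i, ∑ j, a i j * (b i * b j) ≤ ∑ i, (∑ j, a i j) * b i ^ 2 := by
  have hswap : ∑ i, ∑ j, a i j * b j ^ 2 = ∑ i, ∑ j, a i j * b i ^ 2 := by
    rw [Finset.sum_comm]
    simp_rw [hsymm _ (_ : ι)]
  calc ∑ i, ∑ j, a i j * (b i * b j)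
      ≤ ∑ i, ∑ j, a i j * ((b i ^ 2 + b j ^ 2) / 2) := by
        gcongr with i _ j _
        · exact ha i j
        · nlinarith [sq_nonneg (b i - b j)]
    _ = (∑ i, ∑ j, a i j * b i ^ 2 + ∑ i, ∑ j, a i j * b j ^ 2) / 2 := by
        simp only [mul_add, add_div, Finset.sum_add_distrib, Finset.sum_div, mul_div_assoc]
    _ = ∑ i, (∑ j, a i j) * b i ^ 2 := by
        rw [hswap, add_self_div_two]
        simp only [Finset.sum_mul]

theorem EuclideanSpace.norm_le_mul_norm_of_forall {𝕜 ι : Type*} [RCLike 𝕜] [Fintype ι]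
    {x y : EuclideanSpace 𝕜 ι} {c : ℝ} (hc : 0 ≤ c) (h : ∀ i, ‖x i‖ ≤ c * ‖y i‖) :
    ‖x‖ ≤ c * ‖y‖ := by
  rw [← sq_le_sq₀ (norm_nonneg _) (by positivity), mul_pow, EuclideanSpace.norm_sq_eq,
    EuclideanSpace.norm_sq_eq, Finset.mul_sum]
  gcongr with i
  rw [← mul_pow]
  exact pow_le_pow_left₀ (norm_nonneg _) (h i) 2

section Spectral

variable {𝕜 E : Type*} [RCLike 𝕜] [NormedAddCommGroup E] [InnerProductSpace 𝕜 E]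
  [FiniteDimensional 𝕜 E] {T : E →ₗ[𝕜] E} {n : ℕ}

theorem LinearMap.IsPositive.eigenvalues_le_one (hT : T.IsPositive) (hT1 : T ≤ 1)
    (hn : Module.finrank 𝕜 E = n) (i : Fin n) : hT.isSymmetric.eigenvalues hn i ≤ 1 := by
  simpa [hT.isSymmetric.apply_eigenvectorBasis, inner_sub_right, inner_smul_right] using
    hT1.re_inner_nonneg_right (hT.isSymmetric.eigenvectorBasis hn i)

theorem LinearMap.IsSymmetric.repr_eigenvectorBasis_of_iterate (hT : T.IsSymmetric)
    (hn : Module.finrank 𝕜 E = n) {y : ℕ → E} (hy : ∀ k, y (k + 1) = T (y k)) (k : ℕ)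
    (i : Fin n) :
    (hT.eigenvectorBasis hn).repr (y k) i =
      (hT.eigenvalues hn i : 𝕜) ^ k * (hT.eigenvectorBasis hn).repr (y 0) i := by
  induction k with
  | zero => simp
  | succ k ih => rw [hy, hT.eigenvectorBasis_apply_self_apply, ih, pow_succ', mul_assoc]

theorem LinearMap.IsSymmetric.exists_apply_eq_self_norm_sub_le_pow (hT : T.IsSymmetric)
    (hn : Module.finrank 𝕜 E = n) (hev : ∀ i, hT.eigenvalues hn i ∈ Set.Ioc (-1) 1)
    {y : ℕ → E} (hy : ∀ k, y (k + 1) = T (y k)) :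
    ∃ w r, T w = w ∧ 0 ≤ r ∧ r < 1 ∧ ∀ k, ‖y k - w‖ ≤ ‖y 0‖ * r ^ k := by
  set b := hT.eigenvectorBasis hn
  set μ := hT.eigenvalues hn
  obtain ⟨r, hr0, hr1, hr⟩ :=
    exists_nonneg_lt_one_forall_le (f := fun i => if μ i = 1 then 0 else |μ i|) fun i => by
      obtain ⟨hlo, hhi⟩ := hev i
      split_ifs with h
      · exact one_pos
      · exact abs_lt.2 ⟨hlo, hhi.lt_of_ne h⟩
  set w := b.repr.symm (WithLp.toLp 2 fun i => if μ i = 1 then b.repr (y 0) i else 0)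
  have hw (i : Fin n) : b.repr w i = if μ i = 1 then b.repr (y 0) i else 0 := by simp [w]
  have hyk (k : ℕ) (i : Fin n) : b.repr (y k) i = (μ i : 𝕜) ^ k * b.repr (y 0) i :=
    hT.repr_eigenvectorBasis_of_iterate hn hy k i
  refine ⟨w, r, b.repr.injective ?_, hr0, hr1, fun k => ?_⟩
  · ext i
    rw [hT.eigenvectorBasis_apply_self_apply, hw]
    split_ifs with h <;> simp [μ, h]
  · rw [← b.repr.norm_map, ← b.repr.norm_map (y 0), mul_comm]
    refine EuclideanSpace.norm_le_mul_norm_of_forall (pow_nonneg hr0 k) fun i => ?_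
    rw [map_sub, PiLp.sub_apply, hyk, hw]
    split_ifs with h
    · rw [h, RCLike.ofReal_one, one_pow, one_mul, sub_self, norm_zero]
      positivity
    · rw [sub_zero, norm_mul, norm_pow, RCLike.norm_ofReal]
      gcongr
      simpa [h] using hr i

end Spectral

section Matrix

variable {𝕜 ι : Type*} [RCLike 𝕜] [Fintype ι]

theorem Matrix.norm_star_dotProduct_mulVec_le (A : Matrix ι ι 𝕜) (x : ι → 𝕜) :
    ‖star x ⬝ᵥ A *ᵥ x‖ ≤ ∑ i, ∑ j, ‖A i j‖ * (‖x i‖ * ‖x j‖) := by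
  simp only [dotProduct, mulVec, Finset.mul_sum]
  refine (norm_sum_le _ _).trans (Finset.sum_le_sum fun i _ => (norm_sum_le _ _).trans ?_)
  refine Finset.sum_le_sum fun j _ => ?_
  rw [norm_mul, norm_mul, Pi.star_apply, norm_star]
  exact le_of_eq (by ring)

theorem Matrix.IsHermitian.re_star_dotProduct_mulVec_le {A : Matrix ι ι 𝕜} (hA : A.IsHermitian)
    (x : ι → 𝕜) : RCLike.re (star x ⬝ᵥ A *ᵥ x) ≤ ∑ i, (∑ j, ‖A i j‖) * ‖x i‖ ^ 2 :=
  calc RCLike.re (star x ⬝ᵥ A *ᵥ x)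
      ≤ ∑ i, ∑ j, ‖A i j‖ * (‖x i‖ * ‖x j‖) :=
        (RCLike.re_le_norm _).trans (A.norm_star_dotProduct_mulVec_le x)
    _ ≤ ∑ i, (∑ j, ‖A i j‖) * ‖x i‖ ^ 2 :=
        sum_sum_mul_mul_le_of_symm (fun _ _ => norm_nonneg _)
          (fun i j => by rw [← hA.apply i j, norm_star]) _

variable [DecidableEq ι]

theorem Matrix.IsHermitian.le_diagonal_of_sum_norm_le {A : Matrix ι ι 𝕜} (hA : A.IsHermitian)
    {q : ι → ℝ} (hq : ∀ i, ∑ j, ‖A i j‖ ≤ q i) : A ≤ diagonal fun i => (q i : 𝕜) := by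
  have hD : (diagonal fun i => (q i : 𝕜)).IsHermitian := by
    simp [IsHermitian, diagonal_conjTranspose]
  refine PosSemidef.of_dotProduct_mulVec_nonneg (hD.sub hA) fun x => ?_
  rw [RCLike.nonneg_iff, (hD.sub hA).im_star_dotProduct_mulVec_self, sub_mulVec, dotProduct_sub,
    map_sub, sub_nonneg]
  refine ⟨(hA.re_star_dotProduct_mulVec_le x).trans ?_, rfl⟩
  simp only [mulVec_diagonal, dotProduct, Pi.star_apply, map_sum]
  refine Finset.sum_le_sum fun i _ => ?_
  rw [mul_left_comm, RCLike.star_def, RCLike.conj_mul, ← RCLike.ofReal_pow, ← RCLike.ofReal_mul,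
    RCLike.ofReal_re]
  exact mul_le_mul_of_nonneg_right (hq i) (sq_nonneg _)

theorem Matrix.IsHermitian.posSemidef_sub_smul_one {H : Matrix ι ι 𝕜} (hH : H.IsHermitian)
    {l : ℝ} (hl : ∀ i, l ≤ hH.eigenvalues i) : (H - (l : 𝕜) • 1).PosSemidef := by
  rw [← nonneg_iff_posSemidef, sub_nonneg, ← RCLike.real_smul_eq_coe_smul,
    ← Algebra.algebraMap_eq_smul_one, algebraMap_le_iff_le_spectrum hH.isSelfAdjoint,
    hH.spectrum_real_eq_range_eigenvalues]
  rintro _ ⟨i, rfl⟩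
  exact hl i

theorem Matrix.exists_mulVec_eq_self_norm_sub_le_pow {M : Matrix ι ι 𝕜} (hM0 : 0 ≤ M)
    (hM1 : M ≤ 1) {y : ℕ → ι → 𝕜} (hy : ∀ k, y (k + 1) = M *ᵥ y k) :
    ∃ w r, M *ᵥ w = w ∧ 0 ≤ r ∧ r < 1 ∧
      ∀ k, ‖WithLp.toLp 2 (y k - w)‖ ≤ ‖WithLp.toLp 2 (y 0)‖ * r ^ k := by
  set T := toEuclideanLin M
  have hT0 : T.IsPositive := isPositive_toEuclideanLin_iff.2 (nonneg_iff_posSemidef.1 hM0)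
  have hT1 : T ≤ 1 := by
    rw [LinearMap.le_def, show 1 - T = toEuclideanLin (1 - M) by simp [T, Module.End.one_eq_id]]
    exact isPositive_toEuclideanLin_iff.2 (nonneg_iff_posSemidef.1 (sub_nonneg.2 hM1))
  obtain ⟨w, r, hw, hr0, hr1, hconv⟩ := hT0.isSymmetric.exists_apply_eq_self_norm_sub_le_pow rfl
    (fun i => ⟨by linarith [hT0.nonneg_eigenvalues rfl i], hT0.eigenvalues_le_one hT1 rfl i⟩)
    (y := fun k => WithLp.toLp 2 (y k)) (fun k => by rw [hy]; rfl)
  exact ⟨w.ofLp, r, congrArg WithLp.ofLp hw, hr0, hr1, hconv⟩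

theorem Matrix.exists_mulVec_eq_zero_norm_mulVec_sub_le_pow {A Q D : Matrix ι ι 𝕜}
    (hD : IsUnit D) (hQ : Q = Dᴴ * D) (hA0 : 0 ≤ A) (hAQ : A ≤ Q) {x : ℕ → ι → 𝕜}
    (hx : ∀ n, x (n + 1) = x n - Q⁻¹ *ᵥ (A *ᵥ x n)) :
    ∃ u r, A *ᵥ u = 0 ∧ 0 ≤ r ∧ r < 1 ∧
      ∀ n, ‖WithLp.toLp 2 (D *ᵥ (x n - u))‖ ≤ ‖WithLp.toLp 2 (D *ᵥ x 0)‖ * r ^ n := by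
  have hDD' : D * D⁻¹ = 1 := mul_nonsing_inv D ((isUnit_iff_isUnit_det D).1 hD)
  have hD'D : D⁻¹ * D = 1 := nonsing_inv_mul D ((isUnit_iff_isUnit_det D).1 hD)
  set B := star D⁻¹ * A * D⁻¹ with hB
  have hB0 : 0 ≤ B := star_left_conjugate_nonneg hA0 _
  have hB1 : B ≤ 1 :=
    calc B ≤ star D⁻¹ * Q * D⁻¹ := star_left_conjugate_le_conjugate hAQ _
      _ = 1 := by
        rw [hQ, star_eq_conjTranspose, ← Matrix.mul_assoc, ← conjTranspose_mul,
          Matrix.mul_assoc, hDD', conjTranspose_one, Matrix.one_mul]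
  have hstep (n : ℕ) : D *ᵥ x (n + 1) = (1 - B) *ᵥ (D *ᵥ x n) := by
    rw [hx, hQ, Matrix.mul_inv_rev, sub_mulVec, one_mulVec, mulVec_sub, mulVec_mulVec,
      mulVec_mulVec, mulVec_mulVec, hB, ← Matrix.mul_assoc, hDD', Matrix.one_mul,
      Matrix.mul_assoc _ D⁻¹ D, hD'D, Matrix.mul_one, star_eq_conjTranspose,
      conjTranspose_nonsing_inv]
  obtain ⟨w, r, hw, hr0, hr1, hconv⟩ :=
    exists_mulVec_eq_self_norm_sub_le_pow (sub_nonneg.2 hB1) (sub_le_self 1 hB0)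
      (y := fun n => D *ᵥ x n) hstep
  refine ⟨D⁻¹ *ᵥ w, r, ?_, hr0, hr1, fun n => ?_⟩
  · have hBw : B *ᵥ w = 0 := by
      rwa [sub_mulVec, one_mulVec, sub_eq_self] at hw
    calc A *ᵥ D⁻¹ *ᵥ w = Dᴴ *ᵥ B *ᵥ w := by
          rw [hB, mulVec_mulVec, mulVec_mulVec, ← Matrix.mul_assoc, ← Matrix.mul_assoc,
            star_eq_conjTranspose, ← conjTranspose_mul, hD'D, conjTranspose_one, Matrix.one_mul]
      _ = 0 := by rw [hBw, mulVec_zero]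
  · rw [mulVec_sub, mulVec_mulVec, hDD', one_mulVec]
    exact hconv n

end Matrix

theorem stmt_10_general {N : ℕ} (H : Matrix (Fin N) (Fin N) ℂ) (hH : H.IsHermitian)
    (lmin : ℝ)
    (hmin2 : ∀ i, lmin ≤ hH.eigenvalues i)
    (q : Fin N → ℝ) (Q : Matrix (Fin N) (Fin N) ℂ)
    (hQdiag : Q = Matrix.diagonal fun i => (q i : ℂ))
    (hQinv : IsUnit Q)
    (hq : ∀ i, ∑ j, ‖(H - (lmin : ℂ) • 1) i j‖ ≤ q i)
    (x₀ : Fin N → ℂ) (x : ℕ → Fin N → ℂ) (hx0 : x 0 = x₀)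
    (hxrec : ∀ n, x (n + 1) = x n - Q⁻¹ *ᵥ ((H - (lmin : ℂ) • 1) *ᵥ x n)) :
    ∃ (u : Fin N → ℂ) (r : ℝ), H *ᵥ u = (lmin : ℂ) • u ∧ 0 ≤ r ∧ r < 1 ∧
      ∀ n, l2norm ((Matrix.diagonal fun i => (Real.sqrt (q i) : ℂ)) *ᵥ (x n - u)) ≤
        l2norm ((Matrix.diagonal fun i => (Real.sqrt (q i) : ℂ)) *ᵥ x₀) * r ^ n := by
  have hA : (H - (lmin : ℂ) • 1).PosSemidef := hH.posSemidef_sub_smul_one hmin2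
  have hq0 (i : Fin N) : 0 < q i := by
    refine lt_of_le_of_ne ((Finset.sum_nonneg fun j _ => norm_nonneg _).trans (hq i)) (Ne.symm ?_)
    exact_mod_cast (Pi.isUnit_iff.1 (isUnit_diagonal.1 (hQdiag ▸ hQinv)) i).ne_zero
  have hD : IsUnit (diagonal fun i => (√(q i) : ℂ)) :=
    isUnit_diagonal.2 (Pi.isUnit_iff.2 fun i =>
      Ne.isUnit (by simpa using (Real.sqrt_pos.2 (hq0 i)).ne'))
  have hQD : Q = (diagonal fun i => (√(q i) : ℂ))ᴴ * diagonal fun i => (√(q i) : ℂ) := by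
    simp [hQdiag, diagonal_conjTranspose, diagonal_mul_diagonal, ← Complex.ofReal_mul,
      Real.mul_self_sqrt (hq0 _).le]
  obtain ⟨u, r, hu, hr0, hr1, hconv⟩ := exists_mulVec_eq_zero_norm_mulVec_sub_le_pow hD hQD
    (nonneg_iff_posSemidef.2 hA) (hQdiag ▸ hA.isHermitian.le_diagonal_of_sum_norm_le hq) hxrec
  refine ⟨u, r, ?_, hr0, hr1, fun n => ?_⟩
  · rwa [sub_mulVec, smul_mulVec, one_mulVec, sub_eq_zero] at hu
  · simpa only [l2norm_eq_norm_toLp, ← hx0] using hconv n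

/-- Let `H` be an `N × N` Hermitian complex matrix with minimal eigenvalue
`λ_min`, and let `Q` be an invertible diagonal matrix with real diagonal entries satisfying
`Q(i,i) ≥ Σ_j |H(i,j) - λ_min δ(i,j)|` for every `i`.  Then for every initial vector `x₀`,
the sequence `x_{n+1} = x_n - Q⁻¹ (H - λ_min I) x_n` converges exponentially to a vector
`u` with `H u = λ_min u`: there exist `u` with `H u = λ_min u` and `r ∈ [0,1)` such that
`‖Q^{1/2}(x_n - u)‖₂ ≤ ‖Q^{1/2} x₀‖₂ rⁿ` for all `n`. -/
theorem stmt_10 {N : ℕ} (H : Matrix (Fin N) (Fin N) ℂ) (hH : H.IsHermitian)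
    (lmin : ℝ)
    (hmin1 : ∃ i, hH.eigenvalues i = lmin)
    (hmin2 : ∀ i, lmin ≤ hH.eigenvalues i)
    (q : Fin N → ℝ) (Q : Matrix (Fin N) (Fin N) ℂ)
    (hQdiag : Q = Matrix.diagonal fun i => (q i : ℂ))
    (hQinv : IsUnit Q)
    (hq : ∀ i, ∑ j, ‖(H - (lmin : ℂ) • 1) i j‖ ≤ q i)
    (x₀ : Fin N → ℂ) (x : ℕ → Fin N → ℂ) (hx0 : x 0 = x₀)
    (hxrec : ∀ n, x (n + 1) = x n - Q⁻¹ *ᵥ ((H - (lmin : ℂ) • 1) *ᵥ x n)) :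
    ∃ (u : Fin N → ℂ) (r : ℝ), H *ᵥ u = (lmin : ℂ) • u ∧ 0 ≤ r ∧ r < 1 ∧
      ∀ n, l2norm ((Matrix.diagonal fun i => (Real.sqrt (q i) : ℂ)) *ᵥ (x n - u)) ≤
        l2norm ((Matrix.diagonal fun i => (Real.sqrt (q i) : ℂ)) *ᵥ x₀) * r ^ n :=
  stmt_10_general H hH lmin hmin2 q Q hQdiag hQinv hq x₀ x hx0 hxrec
end

section
/- Let G = (V, E) be a connected, undirected, unweighted finite graph, let S₁, …, S_d be complex matrices indexed by V with S_k(i,j) = 0 whenever ρ(i,j) > 1, let A = Σ_{l₁=0}^{L₁} ··· Σ_{l_d=0}^{L_d} h_{l₁,…,l_d} S₁^{l₁} ··· S_d^{l_d}, let L = L₁ + ··· + L_d, and let Â = Σ_{l₁=0}^{L₁} ··· Σ_{l_d=0}^{L_d} |h_{l₁,…,l_d}| · |S₁|^{l₁} ··· |S_d|^{l_d}, where |S|(i,j) = |S(i,j)|. For a positive constant c, define the diagonal matrix Q̂_c with entries Q̂_c(i,i) = max_{j : ρ(j,i) ≤ L} max( Σ_{k∈V} Â(j,k), Σ_{k∈V}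 Â(k,j), c ). Then Q̂_c(i,i) ≥ P_A(i,i) for every i ∈ V, and consequently Q̂_c − P_A is positive semidefinite, where P_A is the diagonal preconditioning matrix of A computed with the geodesic-width parameter L. -/
open Matrix BigOperators
open scoped ComplexOrder

/-- The diagonal entries of the matrix `Q̂_c` for a nonnegative matrix `Â` and width `L`:
`Q̂_c(i,i) = max_{j : ρ(j,i) ≤ L} max( Σ_{k∈V} Â(j,k), Σ_{k∈V} Â(k,j), c )`. -/
noncomputable def qhat {V : Type*} [Fintype V] (G : SimpleGraph V)
    (Ahat : Matrix V V ℝ) (L : ℕ) (c : ℝ) (i : V) : ℝ :=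
  (gball G i L).sup'
    ⟨i, by simp [gball, SimpleGraph.dist_self]⟩
    fun j => max (max (∑ k, Ahat j k) (∑ k, Ahat k j)) c

/-!
Entrywise, `‖S₁^{l₁} ⋯ S_d^{l_d}‖ ≤ |S₁|^{l₁} ⋯ |S_d|^{l_d}` by the triangle inequality in each
matrix product, so `|A| ≤ Â` entrywise. Hence every partial absolute row or column sum of `A`
over a ball is bounded by the full row or column sum of the nonnegative matrix `Â`, and taking
maxima over `B(i, L)` gives `P_A(i,i) ≤ Q̂_c(i,i)`; a diagonal matrix with nonnegative real
entries is positive semidefinite.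
-/

namespace Matrix

variable {l m n R : Type*} [NormedRing R]

theorem norm_mul_apply_le_of_le [Fintype m] {M : Matrix l m R} {N : Matrix m n R}
    {P : Matrix l m ℝ} {Q : Matrix m n ℝ}
    (hM : ∀ i j, ‖M i j‖ ≤ P i j) (hN : ∀ i j, ‖N i j‖ ≤ Q i j) (i : l) (j : n) :
    ‖(M * N) i j‖ ≤ (P * Q) i j := by
  rw [mul_apply, mul_apply]
  calc ‖∑ k, M i k * N k j‖ ≤ ∑ k, ‖M i k‖ * ‖N k j‖ :=
        (norm_sum_le _ _).trans (Finset.sum_le_sum fun k _ => norm_mul_le _ _)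
    _ ≤ ∑ k, P i k * Q k j :=
        Finset.sum_le_sum fun k _ =>
          mul_le_mul (hM i k) (hN k j) (norm_nonneg _) ((norm_nonneg _).trans (hM i k))

theorem norm_sum_smul_apply_le_of_le {ι : Type*} (s : Finset ι)
    (h : ι → R) {M : ι → Matrix l m R} {P : ι → Matrix l m ℝ}
    (hMP : ∀ x ∈ s, ∀ i j, ‖M x i j‖ ≤ P x i j) (i : l) (j : m) :
    ‖(∑ x ∈ s, h x • M x) i j‖ ≤ (∑ x ∈ s, ‖h x‖ • P x) i j := by
  simp only [sum_apply, smul_apply, smul_eq_mul]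
  exact (norm_sum_le _ _).trans <| Finset.sum_le_sum fun x hx =>
    (norm_mul_le _ _).trans (mul_le_mul_of_nonneg_left (hMP x hx i j) (norm_nonneg _))

variable [DecidableEq m] [NormOneClass R]

theorem norm_one_apply_le (i j : m) : ‖(1 : Matrix m m R) i j‖ ≤ (1 : Matrix m m ℝ) i j := by
  by_cases hij : i = j <;> simp [one_apply, hij]

theorem norm_list_prod_apply_le_of_le [Fintype m] {ι : Type*} (ls : List ι)
    {M : ι → Matrix m m R} {P : ι → Matrix m m ℝ}
    (hMP : ∀ x ∈ ls, ∀ i j, ‖M x i j‖ ≤ P x i j) (i j : m) :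
    ‖(ls.map M).prod i j‖ ≤ (ls.map P).prod i j := by
  induction ls generalizing i j with
  | nil => exact norm_one_apply_le i j
  | cons x t ih =>
    simp only [List.map_cons, List.prod_cons]
    exact norm_mul_apply_le_of_le (hMP x List.mem_cons_self)
      (ih fun y hy => hMP y (List.mem_cons_of_mem _ hy)) i j

theorem norm_pow_apply_le_of_le [Fintype m] {M : Matrix m m R} {P : Matrix m m ℝ}
    (hMP : ∀ i j, ‖M i j‖ ≤ P i j) (k : ℕ) (i j : m) :
    ‖(M ^ k) i j‖ ≤ (P ^ k) i j := by
  simpa [List.map_replicate, List.prod_replicate] using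
    norm_list_prod_apply_le_of_le (List.replicate k ()) (M := fun _ => M) (P := fun _ => P)
      (fun _ _ => hMP) i j

end Matrix

theorem Finset.sum_norm_le_sum_univ_of_le {ι E : Type*} [Fintype ι] [SeminormedAddCommGroup E]
    (s : Finset ι) {a : ι → E} {b : ι → ℝ} (hab : ∀ j, ‖a j‖ ≤ b j) :
    ∑ j ∈ s, ‖a j‖ ≤ ∑ j, b j :=
  (Finset.sum_le_sum fun j _ => hab j).trans <|
    Finset.sum_le_sum_of_subset_of_nonneg (Finset.subset_univ _)
      fun j _ _ => (norm_nonneg _).trans (hab j)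

theorem precond_le_qhat {V : Type*} [Fintype V] (G : SimpleGraph V)
    {A : Matrix V V ℂ} {Ahat : Matrix V V ℝ}
    (hA : ∀ i j, ‖A i j‖ ≤ Ahat i j) (ω : ℕ) (c : ℝ) (i : V) :
    precond G A ω i ≤ qhat G Ahat ω c i := by
  refine Finset.sup'_le _ _ fun k hk => le_trans ?_ (Finset.le_sup' _ hk)
  exact max_le
    ((Finset.sum_norm_le_sum_univ_of_le _ fun j => hA j k).trans
      (le_max_of_le_left (le_max_right _ _)))
    ((Finset.sum_norm_le_sum_univ_of_le _ fun j => hA k j).trans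
      (le_max_of_le_left (le_max_left _ _)))

theorem Matrix.posSemidef_diagonal_ofReal_sub {n : Type*} [Fintype n] [DecidableEq n]
    {f g : n → ℝ} (hfg : ∀ i, f i ≤ g i) :
    (diagonal (fun i => (g i : ℂ)) - diagonal fun i => (f i : ℂ)).PosSemidef := by
  rw [diagonal_sub]
  refine posSemidef_diagonal_iff.mpr fun i => ?_
  rw [← Complex.ofReal_sub, Complex.zero_le_real, sub_nonneg]
  exact hfg i

theorem stmt_13_general {V : Type*} [Fintype V] [DecidableEq V]
    (G : SimpleGraph V)
    (d : ℕ) (S : Fin d → Matrix V V ℂ)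
    (L : Fin d → ℕ) (h : (∀ k, Fin (L k + 1)) → ℂ)
    (A : Matrix V V ℂ)
    (hA : A = ∑ l : ∀ k, Fin (L k + 1),
      h l • ((List.finRange d).map fun k => S k ^ (l k : ℕ)).prod)
    (Ahat : Matrix V V ℝ)
    (hAhat : Ahat = ∑ l : ∀ k, Fin (L k + 1),
      ‖h l‖ •
        ((List.finRange d).map fun k =>
          (Matrix.of fun i j => ‖S k i j‖) ^ (l k : ℕ)).prod)
    (c : ℝ) :
    (∀ i, precond G A (∑ k, L k) i ≤ qhat G Ahat (∑ k, L k) c i) ∧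
      ((Matrix.diagonal fun i => (qhat G Ahat (∑ k, L k) c i : ℂ)) -
        Matrix.diagonal fun i => (precond G A (∑ k, L k) i : ℂ)).PosSemidef := by
  have hA_le : ∀ i j, ‖A i j‖ ≤ Ahat i j := by
    subst hA hAhat
    refine norm_sum_smul_apply_le_of_le _ h fun l _ => ?_
    refine norm_list_prod_apply_le_of_le _ fun k _ => ?_
    exact norm_pow_apply_le_of_le (fun _ _ => le_rfl) _
  have hP_le : ∀ i, precond G A (∑ k, L k) i ≤ qhat G Ahat (∑ k, L k) c i :=
    precond_le_qhat G hA_le _ c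
  exact ⟨hP_le, posSemidef_diagonal_ofReal_sub hP_le⟩

/-- Let `G` be a connected finite graph, `S₁, …, S_d` graph shifts of
geodesic-width at most 1, `A` the polynomial filter with coefficients `h`, `L = L₁ + ⋯ + L_d`,
and `Â` the corresponding filter with entrywise-absolute-value shifts and coefficients `|h|`.
For `c > 0`, the diagonal matrix `Q̂_c` with entries
`Q̂_c(i,i) = max_{j : ρ(j,i) ≤ L} max( Σ_k Â(j,k), Σ_k Â(k,j), c )` satisfies
`Q̂_c(i,i) ≥ P_A(i,i)` for every `i`, and consequently `Q̂_c − P_A` is positive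
semidefinite, where `P_A` is the diagonal preconditioning matrix of `A` computed with the
geodesic-width parameter `L`. -/
theorem stmt_13 {V : Type*} [Fintype V] [DecidableEq V]
    (G : SimpleGraph V) (hG : G.Connected)
    (d : ℕ) (S : Fin d → Matrix V V ℂ)
    (hS : ∀ k i j, 1 < G.dist i j → S k i j = 0)
    (L : Fin d → ℕ) (h : (∀ k, Fin (L k + 1)) → ℂ)
    (A : Matrix V V ℂ)
    (hA : A = ∑ l : ∀ k, Fin (L k + 1),
      h l • ((List.finRange d).map fun k => S k ^ (l k : ℕ)).prod)
    (Ahat : Matrix V V ℝ)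
    (hAhat : Ahat = ∑ l : ∀ k, Fin (L k + 1),
      ‖h l‖ •
        ((List.finRange d).map fun k =>
          (Matrix.of fun i j => ‖S k i j‖) ^ (l k : ℕ)).prod)
    (c : ℝ) (hc : 0 < c) :
    (∀ i, precond G A (∑ k, L k) i ≤ qhat G Ahat (∑ k, L k) c i) ∧
      ((Matrix.diagonal fun i => (qhat G Ahat (∑ k, L k) c i : ℂ)) -
        Matrix.diagonal fun i => (precond G A (∑ k, L k) i : ℂ)).PosSemidef :=
  stmt_13_general G d S L h A hA Ahat hAhat c
end
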